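/- arXiv:2306.02601 — 12 statements merged into one kernel-verified Lean document; each statement's English description precedes it below -/
import Mathlib

section
/- Let g : ℝ → ℝ be twice differentiable with g'' Lipschitz continuous with constant L̂ on [0,1], and suppose g'(1) = 0. Then |g(0) + (1/2)g'(0) - g(1)| ≤ (5/12)·L̂. -/
theorem stmt_0 (g : ℝ → ℝ) (Lhat : ℝ) (hLhat : 0 ≤ Lhat)
    (hg : ∀ x, DifferentiableAt ℝ g x)
    (hg' : ∀ x, DifferentiableAt ℝ (deriv g) x)
    (hLip : ∀ x ∈ Set.Icc (0:ℝ) 1, ∀ y ∈ Set.Icc (0:ℝ) 1,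
      |deriv (deriv g) x - deriv (deriv g) y| ≤ Lhat * |x - y|)
    (hg1 : deriv g 1 = 0) :
    |g 0 + (1/2) * deriv g 0 - g 1| ≤ (5/12) * Lhat := by
  set g'' := deriv (deriv g) with hg''def
  have hcont : ContinuousOn g'' (Set.Icc (0:ℝ) 1) := by
    apply LipschitzOnWith.continuousOn (K := ⟨Lhat, hLhat⟩)
    apply LipschitzOnWith.of_dist_le_mul
    intro x hx y hy
    rw [Real.dist_eq, Real.dist_eq]; exact hLip x hx y hy
  have hint : ∀ t ∈ Set.Icc (0:ℝ) 1, IntervalIntegrable g'' MeasureTheory.volume 0 t :=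
    fun t ht => (hcont.mono (Set.Icc_subset_Icc le_rfl ht.2)).intervalIntegrable_of_Icc ht.1
  -- FTC for g' on [0,t]
  have hftc1 : ∀ t ∈ Set.Icc (0:ℝ) 1,
      ∫ s in (0:ℝ)..t, g'' s = deriv g t - deriv g 0 := by
    intro t ht
    apply intervalIntegral.integral_deriv_eq_sub (fun x _ => hg' x) (hint t ht)
  -- Lemma 0: pointwise bound for g'
  have lem0 : ∀ t ∈ Set.Icc (0:ℝ) 1,
      |deriv g t - deriv g 0 - g'' 0 * t| ≤ Lhat * t^2 / 2 := by
    intro t ht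
    have h1 : deriv g t - deriv g 0 - g'' 0 * t = ∫ s in (0:ℝ)..t, (g'' s - g'' 0) := by
      rw [intervalIntegral.integral_sub (hint t ht) intervalIntegrable_const,
        hftc1 t ht, intervalIntegral.integral_const]
      simp only [smul_eq_mul]; ring
    rw [h1]
    have hb : ∀ s ∈ Set.Icc (0:ℝ) t, |g'' s - g'' 0| ≤ Lhat * s := by
      intro s hs
      have hs' : s ∈ Set.Icc (0:ℝ) 1 := ⟨hs.1, hs.2.trans ht.2⟩
      have := hLip s hs' 0 (by norm_num)
      simpa [abs_of_nonneg hs.1] using this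
    calc |∫ s in (0:ℝ)..t, (g'' s - g'' 0)| ≤ ∫ s in (0:ℝ)..t, |g'' s - g'' 0| := by
          rw [← Real.norm_eq_abs]
          apply intervalIntegral.norm_integral_le_integral_norm ht.1
      _ ≤ ∫ s in (0:ℝ)..t, Lhat * s := by
          apply intervalIntegral.integral_mono_on ht.1
          · exact ((hint t ht).sub intervalIntegrable_const).abs
          · exact (continuous_const.mul continuous_id).intervalIntegrable _ _
          · exact hb
      _ = Lhat * t^2 / 2 := by
          rw [intervalIntegral.integral_const_mul, integral_id]
          ring
  -- Lemma 2: E2 bound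
  have lem2 : |deriv g 1 - deriv g 0 - g'' 0| ≤ Lhat / 2 := by
    have := lem0 1 (by norm_num)
    simpa using this
  -- FTC for g on [0,1]
  have hcontg' : ContinuousOn (deriv g) (Set.Icc (0:ℝ) 1) :=
    fun x _ => ((hg' x).continuousAt).continuousWithinAt
  have hintg' : IntervalIntegrable (deriv g) MeasureTheory.volume 0 1 :=
    hcontg'.intervalIntegrable_of_Icc (by norm_num)
  have hftc2 : ∫ t in (0:ℝ)..1, deriv g t = g 1 - g 0 :=
    intervalIntegral.integral_deriv_eq_sub (fun x _ => hg x) hintg'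
  -- Lemma 1: E1 bound
  have lem1 : |g 1 - g 0 - deriv g 0 - g'' 0 / 2| ≤ Lhat / 6 := by
    have h1 : g 1 - g 0 - deriv g 0 - g'' 0 / 2
        = ∫ t in (0:ℝ)..1, (deriv g t - deriv g 0 - g'' 0 * t) := by
      rw [intervalIntegral.integral_sub (hintg'.sub intervalIntegrable_const)
        ((by continuity : Continuous fun t : ℝ => g'' 0 * t).intervalIntegrable _ _),
        intervalIntegral.integral_sub hintg' intervalIntegrable_const,
        hftc2, intervalIntegral.integral_const, intervalIntegral.integral_const_mul, integral_id]
      simp only [smul_eq_mul]; ring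
    rw [h1]
    calc |∫ t in (0:ℝ)..1, (deriv g t - deriv g 0 - g'' 0 * t)|
        ≤ ∫ t in (0:ℝ)..1, |deriv g t - deriv g 0 - g'' 0 * t| := by
          rw [← Real.norm_eq_abs]
          apply intervalIntegral.norm_integral_le_integral_norm (by norm_num)
      _ ≤ ∫ t in (0:ℝ)..1, Lhat * t^2 / 2 := by
          apply intervalIntegral.integral_mono_on (by norm_num)
          · exact ((hintg'.sub intervalIntegrable_const).sub
              ((by continuity : Continuous fun t : ℝ => g'' 0 * t).intervalIntegrable _ _)).abs
          · apply Continuous.intervalIntegrable; continuity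
          · exact lem0
      _ = Lhat / 6 := by
          simp_rw [mul_comm Lhat, mul_div_assoc]
          rw [intervalIntegral.integral_mul_const, integral_pow]
          norm_num
          ring
  -- combine
  have key : g 0 + (1/2) * deriv g 0 - g 1
      = (deriv g 1 - deriv g 0 - g'' 0) / 2 - (g 1 - g 0 - deriv g 0 - g'' 0 / 2) := by
    rw [hg1]; ring
  rw [key]
  calc |(deriv g 1 - deriv g 0 - g'' 0) / 2 - (g 1 - g 0 - deriv g 0 - g'' 0 / 2)|
      ≤ |(deriv g 1 - deriv g 0 - g'' 0) / 2| + |g 1 - g 0 - deriv g 0 - g'' 0 / 2| :=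
        abs_sub _ _
    _ = |deriv g 1 - deriv g 0 - g'' 0| / 2 + |g 1 - g 0 - deriv g 0 - g'' 0 / 2| := by
        rw [abs_div]; norm_num
    _ ≤ (5/12) * Lhat := by linarith
end

section
/- Let L : ℝ^d → ℝ be C² with Hessian ∇²L Lipschitz continuous with constant L on the segment [w, w̄]. Suppose ∇L(w̄) = 0 and L(w̄) = 0. Then |L(w) + (1/2)⟨∇L(w), w̄ - w⟩| ≤ (5L/12)·‖w - w̄‖³. -/
open scoped RealInnerProductSpace

theorem stmt_1 {d : ℕ} (f : EuclideanSpace ℝ (Fin d) → ℝ) (L : ℝ) (hL : 0 ≤ L)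
    (w wbar : EuclideanSpace ℝ (Fin d))
    (H : EuclideanSpace ℝ (Fin d) → (EuclideanSpace ℝ (Fin d) →L[ℝ] EuclideanSpace ℝ (Fin d)))
    (hfdiff : ∀ x ∈ segment ℝ w wbar, DifferentiableAt ℝ f x)
    (hHess : ∀ x ∈ segment ℝ w wbar, HasFDerivAt (gradient f) (H x) x)
    (hLip : ∀ x ∈ segment ℝ w wbar, ∀ y ∈ segment ℝ w wbar, ‖H x - H y‖ ≤ L * ‖x - y‖)
    (hcrit : gradient f wbar = 0) (hzero : f wbar = 0) :
    |f w + (1/2) * ⟪gradient f w, wbar - w⟫| ≤ (5 * L / 12) * ‖w - wbar‖ ^ 3 := by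
  set v : EuclideanSpace ℝ (Fin d) := wbar - w with hv
  set γ : ℝ → EuclideanSpace ℝ (Fin d) := fun t => w + t • v with hγ
  have hγ0 : γ 0 = w := by simp [hγ]
  have hγ1 : γ 1 = wbar := by simp [hγ, hv]
  have hseg : ∀ t ∈ Set.Icc (0:ℝ) 1, γ t ∈ segment ℝ w wbar := by
    intro t ht
    rw [segment_eq_image']
    exact ⟨t, ht, rfl⟩
  have hγd : ∀ t : ℝ, HasDerivAt γ v t := by
    intro t
    simpa [hγ] using ((hasDerivAt_id t).smul_const v).const_add w
  have hγdiff : ∀ s t : ℝ, γ s - γ t = (s - t) • v := by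
    intro s t
    simp only [hγ, sub_smul]
    abel
  set G' : ℝ → ℝ := fun t => ⟪v, gradient f (γ t)⟫ with hG'
  set G'' : ℝ → ℝ := fun t => ⟪v, H (γ t) v⟫ with hG''
  -- derivative of f ∘ γ
  have hgd : ∀ t ∈ Set.Icc (0:ℝ) 1, HasDerivAt (fun t => f (γ t)) (G' t) t := by
    intro t ht
    have h1 := (hfdiff _ (hseg t ht)).hasGradientAt.hasFDerivAt
    have h3 : HasDerivAt (fun t => f (γ t))
        ((InnerProductSpace.toDual ℝ _ (gradient f (γ t))) v) t :=
      h1.comp_hasDerivAt t (hγd t)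
    have h4 : (InnerProductSpace.toDual ℝ _ (gradient f (γ t))) v = G' t := by
      rw [InnerProductSpace.toDual_apply_apply]; exact real_inner_comm _ _
    rw [← h4]; exact h3
  -- derivative of G'
  have hG'd : ∀ t ∈ Set.Icc (0:ℝ) 1, HasDerivAt G' (G'' t) t := by
    intro t ht
    have h1 : HasDerivAt (fun t => gradient f (γ t)) (H (γ t) v) t :=
      (hHess _ (hseg t ht)).comp_hasDerivAt t (hγd t)
    have h2 := ((innerSL ℝ v).hasFDerivAt).comp_hasDerivAt t h1
    exact h2
  -- Lipschitz estimate for G''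
  have hlip : ∀ s ∈ Set.Icc (0:ℝ) 1, ∀ t ∈ Set.Icc (0:ℝ) 1,
      |G'' s - G'' t| ≤ (L * ‖v‖ ^ 3) * |s - t| := by
    intro s hs t ht
    have h1 : G'' s - G'' t = ⟪v, (H (γ s) - H (γ t)) v⟫ := by
      simp [hG'', ContinuousLinearMap.sub_apply, inner_sub_right]
    have h2 : ‖γ s - γ t‖ = |s - t| * ‖v‖ := by
      rw [hγdiff s t, norm_smul, Real.norm_eq_abs]
    calc |G'' s - G'' t| = |⟪v, (H (γ s) - H (γ t)) v⟫| := by rw [h1]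
      _ ≤ ‖v‖ * ‖(H (γ s) - H (γ t)) v‖ := abs_real_inner_le_norm _ _
      _ ≤ ‖v‖ * (‖H (γ s) - H (γ t)‖ * ‖v‖) := by
          gcongr
          exact (H (γ s) - H (γ t)).le_opNorm v
      _ ≤ ‖v‖ * ((L * (|s - t| * ‖v‖)) * ‖v‖) := by
          apply mul_le_mul_of_nonneg_left _ (norm_nonneg v)
          apply mul_le_mul_of_nonneg_right _ (norm_nonneg v)
          rw [← h2]; exact hLip _ (hseg s hs) _ (hseg t ht)
      _ = (L * ‖v‖ ^ 3) * |s - t| := by ring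
  -- continuity of G'' on Icc
  have hcont : ContinuousOn G'' (Set.Icc (0:ℝ) 1) := by
    apply LipschitzOnWith.continuousOn (K := Real.toNNReal (L * ‖v‖ ^ 3))
    apply LipschitzOnWith.of_dist_le'
    intro x hx y hy
    rw [Real.dist_eq, Real.dist_eq]
    exact hlip x hx y hy
  have huIcc : Set.uIcc (0:ℝ) 1 = Set.Icc (0:ℝ) 1 := Set.uIcc_of_le zero_le_one
  have hintG'' : IntervalIntegrable G'' MeasureTheory.volume 0 1 :=
    (hcont.mono (by rw [huIcc])).intervalIntegrable
  have hcont1 : ContinuousOn (fun t => (1 - t) * G'' t) (Set.Icc (0:ℝ) 1) :=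
    (continuous_const.sub continuous_id).continuousOn.mul hcont
  have hint1 : IntervalIntegrable (fun t => (1 - t) * G'' t) MeasureTheory.volume 0 1 :=
    (hcont1.mono (by rw [huIcc])).intervalIntegrable
  have hcont2 : ContinuousOn (fun t => (t - 1/2) * G'' t) (Set.Icc (0:ℝ) 1) :=
    (continuous_id.sub continuous_const).continuousOn.mul hcont
  have hint2 : IntervalIntegrable (fun t => (t - 1/2) * G'' t) MeasureTheory.volume 0 1 :=
    (hcont2.mono (by rw [huIcc])).intervalIntegrable
  -- FTC for G'
  have hG'1 : G' 1 = 0 := by simp only [hG', hγ1, hcrit, inner_zero_right]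
  have id2 : (∫ t in (0:ℝ)..1, G'' t) = G' 1 - G' 0 := by
    apply intervalIntegral.integral_eq_sub_of_hasDerivAt
    · intro t ht
      exact hG'd t (huIcc ▸ ht)
    · exact hintG''
  -- FTC for φ
  set φ : ℝ → ℝ := fun t => f (γ t) + (1 - t) * G' t with hφ
  have id1 : (∫ t in (0:ℝ)..1, (1 - t) * G'' t) = φ 1 - φ 0 := by
    apply intervalIntegral.integral_eq_sub_of_hasDerivAt
    · intro t ht
      have ht' : t ∈ Set.Icc (0:ℝ) 1 := huIcc ▸ ht
      have h2 : HasDerivAt (fun t => (1 - t) * G' t)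
          ((0 - 1) * G' t + (1 - t) * G'' t) t :=
        ((hasDerivAt_const t (1:ℝ)).sub (hasDerivAt_id t)).mul (hG'd t ht')
      have h3 := (hgd t ht').add h2
      convert h3 using 1
      · rfl
      · ring
    · exact hint1
  have hφ1 : φ 1 = 0 := by simp [hφ, hγ1, hzero]
  have hφ0 : φ 0 = f w + G' 0 := by simp [hφ, hγ0]
  -- target as an integral
  have hkey : f w + (1/2) * G' 0 = ∫ t in (0:ℝ)..1, (t - 1/2) * G'' t := by
    have hsplit : (∫ t in (0:ℝ)..1, (t - 1/2) * G'' t)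
        = (1/2) * (∫ t in (0:ℝ)..1, G'' t) - ∫ t in (0:ℝ)..1, (1 - t) * G'' t := by
      rw [← intervalIntegral.integral_const_mul, ← intervalIntegral.integral_sub
        (hintG''.const_mul _) hint1]
      congr 1
      ext t
      ring
    rw [hsplit, id1, id2, hG'1, hφ1, hφ0]
    ring
  -- centering
  set m : ℝ := G'' (1/2) with hm
  have hhalf : (1/2 : ℝ) ∈ Set.Icc (0:ℝ) 1 := by norm_num
  have hcenter : (∫ t in (0:ℝ)..1, (t - 1/2) * G'' t)
      = ∫ t in (0:ℝ)..1, (t - 1/2) * (G'' t - m) := by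
    have h1 : (∫ t in (0:ℝ)..1, (t - 1/2) * m)
        = (∫ t in (0:ℝ)..1, (t - 1/2 : ℝ)) * m :=
      intervalIntegral.integral_mul_const _ _
    have h2 : (∫ t in (0:ℝ)..1, (t - 1/2 : ℝ)) = 0 := by
      rw [intervalIntegral.integral_sub intervalIntegral.intervalIntegrable_id
        intervalIntegrable_const]
      simp [integral_id]
    have h3 : IntervalIntegrable (fun t => (t - 1/2) * m) MeasureTheory.volume 0 1 :=
      ((continuous_id.sub continuous_const).mul continuous_const).intervalIntegrable _ _
    rw [eq_comm]
    have : (fun t => (t - 1/2) * (G'' t - m)) = fun t => (t - 1/2) * G'' t - (t - 1/2) * m := by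
      ext t; ring
    rw [this, intervalIntegral.integral_sub hint2 h3, h1, h2]
    ring
  -- bound
  have hbound : ‖∫ t in (0:ℝ)..1, (t - 1/2) * (G'' t - m)‖ ≤ (L * ‖v‖ ^ 3 / 4) * |1 - (0:ℝ)| := by
    apply intervalIntegral.norm_integral_le_of_norm_le_const
    intro x hx
    have hx' : x ∈ Set.Icc (0:ℝ) 1 := by
      rw [Set.uIoc_of_le zero_le_one] at hx
      exact ⟨le_of_lt hx.1, hx.2⟩
    have h1 : |G'' x - m| ≤ (L * ‖v‖ ^ 3) * |x - 1/2| := hlip x hx' _ hhalf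
    have h2 : |x - 1/2| ≤ 1/2 := by
      rw [abs_le]
      constructor <;> [linarith [hx'.1]; linarith [hx'.2]]
    calc ‖(x - 1/2) * (G'' x - m)‖ = |x - 1/2| * |G'' x - m| := abs_mul _ _
      _ ≤ |x - 1/2| * ((L * ‖v‖ ^ 3) * |x - 1/2|) := by
          gcongr
      _ ≤ (1/2) * ((L * ‖v‖ ^ 3) * (1/2)) := by
          gcongr
      _ = L * ‖v‖ ^ 3 / 4 := by ring
  have hinner : ⟪gradient f w, wbar - w⟫ = G' 0 := by
    rw [hG']
    simp only [hγ0]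
    rw [real_inner_comm]
  have hnormv : ‖v‖ = ‖w - wbar‖ := by rw [hv, norm_sub_rev]
  rw [hinner, hkey, hcenter]
  calc |∫ t in (0:ℝ)..1, (t - 1/2) * (G'' t - m)|
      = ‖∫ t in (0:ℝ)..1, (t - 1/2) * (G'' t - m)‖ := (Real.norm_eq_abs _).symm
    _ ≤ (L * ‖v‖ ^ 3 / 4) * |1 - (0:ℝ)| := hbound
    _ = L * ‖w - wbar‖ ^ 3 / 4 := by rw [hnormv]; simp
    _ ≤ (5 * L / 12) * ‖w - wbar‖ ^ 3 := by nlinarith [pow_nonneg (norm_nonneg (w - wbar)) 3]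
end

section
/- Let L : ℝ^d → [0,∞) be C² with ∇²L Lipschitz with constant L on the tube S_r = {w : dist(w,S) ≤ r}, where S = argmin L is the set of zeros of L. Assume the quadratic growth condition L(w) ≥ (α/2)·dist²(w,S) holds on S_r and r < 6α/(5L). Then for every w ∈ S_r and every nearest point w̄ ∈ proj_S(w), ⟨∇L(w), w - w̄⟩ ≥ (2 - 5Lr/(3α))·L(w). -/
open scoped RealInnerProductSpace
open Metric Set

set_option maxHeartbeats 1000000

theorem stmt_2 {d : ℕ} (f : EuclideanSpace ℝ (Fin d) → ℝ) (L α r : ℝ)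
    (hL : 0 ≤ L) (hα : 0 < α) (hr : 0 < r)
    (S : Set (EuclideanSpace ℝ (Fin d))) (hS : S = {w | f w = 0}) (hSne : S.Nonempty)
    (hnonneg : ∀ w, 0 ≤ f w)
    (H : EuclideanSpace ℝ (Fin d) → (EuclideanSpace ℝ (Fin d) →L[ℝ] EuclideanSpace ℝ (Fin d)))
    (hfdiff : ∀ x, infDist x S ≤ r → DifferentiableAt ℝ f x)
    (hHess : ∀ x, infDist x S ≤ r → HasFDerivAt (gradient f) (H x) x)
    (hLip : ∀ x, infDist x S ≤ r → ∀ y, infDist y S ≤ r → ‖H x - H y‖ ≤ L * ‖x - y‖)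
    (hQG : ∀ w, infDist w S ≤ r → f w ≥ (α/2) * (infDist w S)^2)
    (hr' : r < 6*α/(5*L))
    (w : EuclideanSpace ℝ (Fin d)) (hw : infDist w S ≤ r)
    (wbar : EuclideanSpace ℝ (Fin d)) (hwbar : wbar ∈ S)
    (hproj : ‖w - wbar‖ = infDist w S) :
    ⟪gradient f w, w - wbar⟫ ≥ (2 - 5*L*r/(3*α)) * f w := by
  classical
  set v : EuclideanSpace ℝ (Fin d) := w - wbar with hv
  have hvr : ‖v‖ ≤ r := by rw [hv, hproj]; exact hw
  set c : ℝ → EuclideanSpace ℝ (Fin d) := fun t => wbar + t • v with hc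
  have hc0 : c 0 = wbar := by simp [hc]
  have hc1 : c 1 = w := by simp [hc, hv]
  have htube : ∀ t ∈ Icc (0:ℝ) 1, infDist (c t) S ≤ r := by
    intro t ht
    calc infDist (c t) S ≤ dist (c t) wbar := infDist_le_dist_of_mem hwbar
      _ = ‖t • v‖ := by rw [dist_eq_norm]; simp [hc]
      _ = |t| * ‖v‖ := by rw [norm_smul, Real.norm_eq_abs]
      _ ≤ 1 * r := by
          apply mul_le_mul _ hvr (norm_nonneg _) zero_le_one
          rw [abs_of_nonneg ht.1]; exact ht.2
      _ = r := one_mul r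
  have hcd : ∀ t : ℝ, HasDerivAt c v t := by
    intro t
    simpa [hc] using ((hasDerivAt_id t).smul_const v).const_add wbar
  -- derivative facts
  have hg : ∀ t ∈ Icc (0:ℝ) 1, HasDerivAt (fun s => f (c s)) ⟪gradient f (c t), v⟫ t := by
    intro t ht
    have hd := (hfdiff _ (htube t ht)).hasGradientAt.hasFDerivAt
    have := hd.comp_hasDerivAt t (hcd t)
    simpa [InnerProductSpace.toDual_apply_apply, Function.comp_def] using this
  have hg1 : ∀ t ∈ Icc (0:ℝ) 1,
      HasDerivAt (fun s => ⟪gradient f (c s), v⟫) ⟪H (c t) v, v⟫ t := by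
    intro t ht
    have hG : HasDerivAt (fun s => gradient f (c s)) (H (c t) v) t :=
      (hHess _ (htube t ht)).comp_hasDerivAt t (hcd t)
    have := hG.inner ℝ (hasDerivAt_const t v)
    simpa using this
  -- Lipschitz bound on the second derivative along the segment
  set K : ℝ := L * ‖v‖^3 with hK
  have hg2bound : ∀ t ∈ Icc (0:ℝ) 1, |⟪H (c t) v, v⟫ - ⟪H (c 0) v, v⟫| ≤ K * t := by
    intro t ht
    have h1 : ⟪H (c t) v, v⟫ - ⟪H (c 0) v, v⟫ = ⟪(H (c t) - H (c 0)) v, v⟫ := by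
      simp [inner_sub_left]
    rw [h1]
    calc |⟪(H (c t) - H (c 0)) v, v⟫| ≤ ‖(H (c t) - H (c 0)) v‖ * ‖v‖ := by
          simpa using abs_real_inner_le_norm ((H (c t) - H (c 0)) v) v
      _ ≤ (‖H (c t) - H (c 0)‖ * ‖v‖) * ‖v‖ := by
          gcongr; exact (H (c t) - H (c 0)).le_opNorm v
      _ ≤ ((L * ‖c t - c 0‖) * ‖v‖) * ‖v‖ := by
          gcongr; exact hLip _ (htube t ht) _ (htube 0 ⟨le_refl 0, zero_le_one⟩)
      _ = K * t := by
          have hnorm : ‖c t - c 0‖ = |t| * ‖v‖ := by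
            simp only [hc]
            rw [add_sub_add_left_eq_sub, zero_smul, sub_zero, norm_smul, Real.norm_eq_abs]
          rw [hnorm, abs_of_nonneg ht.1, hK]; ring
  have hKnn : 0 ≤ K := by positivity
  -- gradient vanishes at wbar
  have hfwbar : f wbar = 0 := by rw [hS] at hwbar; exact hwbar
  have hwbr : infDist wbar S ≤ r := by
    rw [infDist_zero_of_mem hwbar]; exact hr.le
  have hgradbar : gradient f wbar = 0 := by
    have hmin : IsLocalMin f wbar :=
      Filter.Eventually.of_forall (fun x => hfwbar ▸ hnonneg x)
    have h0 := hmin.hasFDerivAt_eq_zero (hfdiff wbar hwbr).hasGradientAt.hasFDerivAt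
    have := congrArg (InnerProductSpace.toDual ℝ _).symm h0
    simpa [gradient] using this
  have hg10 : ⟪gradient f (c 0), v⟫ = 0 := by rw [hc0, hgradbar, inner_zero_left]
  have hg0 : f (c 0) = 0 := by rw [hc0, hfwbar]
  set q : ℝ := ⟪H (c 0) v, v⟫ with hq
  -- Step A : |g1 t - t * q| ≤ K * t^2 / 2 on [0,1]
  have stepA : ∀ t ∈ Icc (0:ℝ) 1, |⟪gradient f (c t), v⟫ - t * q| ≤ K * t^2 / 2 := by
    have hcont : ContinuousOn (fun s => ⟪gradient f (c s), v⟫ - s * q) (Icc 0 1) :=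
      fun t ht => (((hg1 t ht).sub (hasDerivAt_mul_const q)).continuousAt).continuousWithinAt
    have hderiv : ∀ t ∈ Ico (0:ℝ) 1,
        HasDerivWithinAt (fun s => ⟪gradient f (c s), v⟫ - s * q)
          (⟪H (c t) v, v⟫ - q) (Ici t) t :=
      fun t ht => (((hg1 t ⟨ht.1, ht.2.le⟩).sub (hasDerivAt_mul_const q))).hasDerivWithinAt
    have hB : ∀ x : ℝ, HasDerivAt (fun s => K * s^2 / 2) (K * x) x := by
      intro x
      have := ((hasDerivAt_pow 2 x).const_mul K).div_const 2
      refine this.congr_deriv ?_; push_cast; ring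
    have key := image_norm_le_of_norm_deriv_right_le_deriv_boundary hcont hderiv
      (B := fun s => K * s^2 / 2) (B' := fun s => K * s)
      (by rw [Real.norm_eq_abs]; simp only [zero_mul, sub_zero, hg10]; norm_num)
      (fun x => hB x)
      (fun x hx => by
        simpa [Real.norm_eq_abs, hq] using hg2bound x ⟨hx.1, hx.2.le⟩)
    intro t ht
    have := key ht
    simpa [Real.norm_eq_abs, hg10] using this
  -- Step B : |f w - q/2| ≤ K/6
  have stepB : |f w - q / 2| ≤ K / 6 := by
    have hcont : ContinuousOn (fun s => f (c s) - s^2/2 * q) (Icc 0 1) :=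
      fun t ht => (((hg t ht).sub
        (((hasDerivAt_pow 2 t).div_const 2).mul_const q)).continuousAt).continuousWithinAt
    have hderiv : ∀ t ∈ Ico (0:ℝ) 1,
        HasDerivWithinAt (fun s => f (c s) - s^2/2 * q)
          (⟪gradient f (c t), v⟫ - t * q) (Ici t) t := by
      intro t ht
      have h2 : HasDerivAt (fun s : ℝ => s^2/2 * q) (t * q) t := by
        have := ((hasDerivAt_pow 2 t).div_const 2).mul_const q
        refine this.congr_deriv ?_; push_cast; ring
      exact ((hg t ⟨ht.1, ht.2.le⟩).sub h2).hasDerivWithinAt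
    have hB : ∀ x : ℝ, HasDerivAt (fun s => K * s^3 / 6) (K * x^2 / 2) x := by
      intro x
      have := ((hasDerivAt_pow 3 x).const_mul K).div_const 6
      refine this.congr_deriv ?_; push_cast; ring
    have key := image_norm_le_of_norm_deriv_right_le_deriv_boundary hcont hderiv
      (B := fun s => K * s^3 / 6) (B' := fun s => K * s^2 / 2)
      (by simp [hg0]) (fun x => hB x)
      (fun x hx => by
        simpa [Real.norm_eq_abs] using stepA x ⟨hx.1, hx.2.le⟩)
    have hthis := key (right_mem_Icc.2 zero_le_one)
    rw [Real.norm_eq_abs] at hthis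
    norm_num [hc1, hg0] at hthis
    have hb := abs_le.1 hthis
    exact abs_le.2 ⟨by linarith [hb.1], by linarith [hb.2]⟩
  -- combine
  have hA1 := stepA 1 (right_mem_Icc.2 zero_le_one)
  rw [hc1, one_pow, one_mul] at hA1
  have hfw : (0:ℝ) ≤ f w := hnonneg w
  have hvsq : ‖v‖^2 * α ≤ 2 * f w := by
    have := hQG w hw
    rw [← hproj] at this
    linarith
  have hKle : K * α ≤ 2 * L * r * f w := by
    have h1 : K = L * ‖v‖ * ‖v‖^2 := by rw [hK]; ring
    have h2 : L * ‖v‖ * (‖v‖^2 * α) ≤ L * ‖v‖ * (2 * f w) := by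
      apply mul_le_mul_of_nonneg_left hvsq; positivity
    have h3 : L * ‖v‖ * (2 * f w) ≤ L * r * (2 * f w) := by
      apply mul_le_mul_of_nonneg_right _ (by positivity)
      exact mul_le_mul_of_nonneg_left hvr hL
    have h0 : K * α = L * ‖v‖ * (‖v‖^2 * α) := by rw [hK]; ring
    have h4 : L * r * (2 * f w) = 2 * L * r * f w := by ring
    linarith
  have hgoal : ⟪gradient f w, v⟫ ≥ 2 * f w - 5 * K / 6 := by
    have hA := abs_le.1 hA1
    have hBv := abs_le.1 stepB
    linarith [hA.1, hA.2, hBv.1, hBv.2]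
  have hfinal : 2 * f w - 5 * K / 6 ≥ (2 - 5*L*r/(3*α)) * f w := by
    rw [ge_iff_le, sub_mul]
    have : 5*L*r/(3*α) * f w ≥ 5 * K / 6 := by
      rw [ge_iff_le, div_mul_eq_mul_div, le_div_iff₀ (by positivity)]
      have heq : 5 * K / 6 * (3 * α) = 5/2 * (K * α) := by ring
      linarith
    linarith
  calc ⟪gradient f w, w - wbar⟫ = ⟪gradient f w, v⟫ := by rw [hv]
    _ ≥ 2 * f w - 5 * K / 6 := hgoal
    _ ≥ (2 - 5*L*r/(3*α)) * f w := hfinal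
end

section
/- Let L : ℝ^d → [0,∞) be differentiable and satisfy the PŁ* condition ‖∇L(w)‖² ≥ 2α·L(w) for all w in a ball B_{2r}(w₀), where α > 0. Define S = {w : L(w) = 0}. If L(w₀) < (1/2)αr², then S ∩ B_r(w₀) is nonempty and L(w) ≥ (α/8)·dist²(w,S) for all w ∈ B_r(w₀). -/
open Metric Real

lemma my_descent {d : ℕ} (f : EuclideanSpace ℝ (Fin d) → ℝ) (α r c : ℝ)
    (hα : 0 < α) (hr : 0 < r) (hc : 0 < c) (hc2 : c^2 < α/2)
    (w₀ : EuclideanSpace ℝ (Fin d))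
    (hnonneg : ∀ w, 0 ≤ f w) (hdiff : Differentiable ℝ f)
    (hPL : ∀ w ∈ closedBall w₀ (2*r), ‖gradient f w‖^2 ≥ 2*α*f w)
    (w : EuclideanSpace ℝ (Fin d)) (hw : w ∈ closedBall w₀ r)
    (hfw : f w < c^2 * r^2) :
    ∃ s, f s = 0 ∧ ‖s - w‖ ≤ Real.sqrt (f w) / c := by
  set R : ℝ := Real.sqrt (f w) / c with hRdef
  have hR0 : 0 ≤ R := div_nonneg (Real.sqrt_nonneg _) hc.le
  have hRr : R < r := by
    rw [div_lt_iff₀ hc]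
    have : Real.sqrt (f w) < Real.sqrt (c^2 * r^2) := Real.sqrt_lt_sqrt (hnonneg w) hfw
    calc Real.sqrt (f w) < Real.sqrt (c^2*r^2) := this
    _ = c * r := by
        rw [show c^2*r^2 = (c*r)^2 by ring, Real.sqrt_sq (by positivity)]
    _ = r * c := by ring
  have hFcont : Continuous (fun z => Real.sqrt (f z) + c * ‖z - w‖) :=
    (Real.continuous_sqrt.comp hdiff.continuous).add
      (continuous_const.mul ((continuous_id.sub continuous_const).norm))
  obtain ⟨z, hzD, hzmin⟩ := (isCompact_closedBall w R).exists_isMinOn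
    ⟨w, mem_closedBall_self hR0⟩ hFcont.continuousOn
  -- goal: f z = 0
  have hGw : Real.sqrt (f z) + c * ‖z - w‖ ≤ Real.sqrt (f w) := by
    have := hzmin (mem_closedBall_self hR0)
    simpa using this
  have hzw : ‖z - w‖ ≤ R := by
    rw [← dist_eq_norm]; exact mem_closedBall.mp hzD
  have hfz : f z = 0 := by
    by_contra hne
    have hfz : 0 < f z := lt_of_le_of_ne (hnonneg z) (Ne.symm hne)
    have hsz : 0 < Real.sqrt (f z) := Real.sqrt_pos.mpr hfz
    -- z is in the interior of the ball of radius R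
    have hint : ‖z - w‖ < R := by
      have h1 : c * ‖z - w‖ < Real.sqrt (f w) := by linarith
      rw [hRdef]
      rw [lt_div_iff₀ hc]
      linarith [h1]
    -- z is in the big ball
    have hzball : z ∈ closedBall w₀ (2*r) := by
      rw [mem_closedBall]
      calc dist z w₀ ≤ dist z w + dist w w₀ := dist_triangle _ _ _
      _ ≤ R + r := add_le_add (by rw [dist_eq_norm]; exact hzw) (mem_closedBall.mp hw)
      _ ≤ 2*r := by linarith
    have hPLz := hPL z hzball
    set g := gradient f z with hgdef
    have hgpos : 0 < ‖g‖ := by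
      have h1 : 0 < ‖g‖^2 := lt_of_lt_of_le (by positivity) hPLz
      have h2 : 0 ≤ ‖g‖ := norm_nonneg _
      nlinarith
    -- key inequality: 2 c √(f z) < ‖g‖
    have hkey : 2 * c * Real.sqrt (f z) < ‖g‖ := by
      have h1 : (2 * c * Real.sqrt (f z))^2 < ‖g‖^2 := by
        have hs : Real.sqrt (f z)^2 = f z := Real.sq_sqrt (hnonneg z)
        calc (2 * c * Real.sqrt (f z))^2 = 4 * c^2 * (Real.sqrt (f z))^2 := by ring
        _ = 4 * c^2 * f z := by rw [hs]
        _ < 2 * α * f z := by nlinarith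
        _ ≤ ‖g‖^2 := hPLz
      exact lt_of_pow_lt_pow_left₀ 2 (norm_nonneg _) h1
    -- direction of steepest descent
    set u : EuclideanSpace ℝ (Fin d) := -(‖g‖⁻¹ • g) with hudef
    have hnu : ‖u‖ = 1 := by
      rw [hudef, norm_neg, norm_smul, norm_inv, norm_norm,
        inv_mul_cancel₀ hgpos.ne']
    -- derivative of t ↦ f (z + t • u) at 0
    have hline : HasDerivAt (fun t : ℝ => z + t • u) u 0 := by
      simpa using ((hasDerivAt_id (0:ℝ)).smul_const u).const_add z
    have hfd : HasFDerivAt f ((InnerProductSpace.toDual ℝ _) g) z :=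
      (hdiff z).hasGradientAt.hasFDerivAt
    have hfd2 : HasFDerivAt f ((InnerProductSpace.toDual ℝ _) g) (z + (0:ℝ) • u) := by
      simpa using hfd
    have hψ : HasDerivAt (fun t : ℝ => f (z + t • u)) (-‖g‖) 0 := by
      have := hfd2.comp_hasDerivAt 0 hline
      refine this.congr_deriv ?_
      symm
      rw [InnerProductSpace.toDual_apply_apply, hudef]
      rw [inner_neg_right, real_inner_smul_right, real_inner_self_eq_norm_sq]
      field_simp
    have hz0 : f (z + (0:ℝ) • u) = f z := by simp
    have hφ : HasDerivAt (fun t : ℝ => Real.sqrt (f (z + t • u)))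
        (-‖g‖ / (2 * Real.sqrt (f z))) 0 := by
      have hs := (Real.hasDerivAt_sqrt (x := f (z + (0:ℝ) • u)) (by rw [hz0]; exact hfz.ne')).comp 0 hψ
      rw [hz0] at hs
      refine hs.congr_deriv ?_
      ring
    have hneg : -‖g‖ / (2 * Real.sqrt (f z)) < -c := by
      rw [div_lt_iff₀ (by positivity)]
      nlinarith
    -- find small positive t
    have htend := hφ
    rw [hasDerivAt_iff_tendsto_slope] at htend
    have hev1 : ∀ᶠ t in nhdsWithin (0:ℝ) (Set.Ioi 0),
        slope (fun t : ℝ => Real.sqrt (f (z + t • u))) 0 t < -c := by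
      have h1 : ∀ᶠ t in nhdsWithin (0:ℝ) {(0:ℝ)}ᶜ,
          slope (fun t : ℝ => Real.sqrt (f (z + t • u))) 0 t < -c :=
        htend.eventually (Iio_mem_nhds hneg)
      exact h1.filter_mono (nhdsWithin_mono 0 (fun t ht => ne_of_gt ht))
    have hev2 : ∀ᶠ t in nhdsWithin (0:ℝ) (Set.Ioi 0), t < R - ‖z - w‖ := by
      have : Set.Ioo (0:ℝ) (R - ‖z - w‖) ∈ nhdsWithin (0:ℝ) (Set.Ioi 0) :=
        Ioo_mem_nhdsGT_of_mem (by constructor <;> simp [sub_pos.mpr hint])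
      exact Filter.eventually_of_mem this (fun t ht => ht.2)
    have hev3 : ∀ᶠ t in nhdsWithin (0:ℝ) (Set.Ioi 0), 0 < t :=
      eventually_mem_nhdsWithin
    obtain ⟨t, ⟨hslope, htR⟩, ht0⟩ := ((hev1.and hev2).and hev3).exists
    -- derive contradiction with minimality
    have hφt : Real.sqrt (f (z + t • u)) < Real.sqrt (f z) - c * t := by
      rw [slope_def_field] at hslope
      have : (Real.sqrt (f (z + t • u)) - Real.sqrt (f (z + (0:ℝ) • u))) / (t - 0) < -c := hslope
      rw [hz0, sub_zero, div_lt_iff₀ ht0] at this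
      linarith
    have hmem : z + t • u ∈ closedBall w R := by
      rw [mem_closedBall, dist_eq_norm]
      calc ‖z + t • u - w‖ ≤ ‖z - w‖ + ‖t • u‖ := by
            have : z + t • u - w = (z - w) + t • u := by abel
            rw [this]; exact norm_add_le _ _
      _ = ‖z - w‖ + t := by rw [norm_smul, hnu, Real.norm_of_nonneg ht0.le, mul_one]
      _ ≤ R := by linarith
    have := hzmin hmem
    simp only [Set.mem_setOf_eq] at this
    have hcontra : Real.sqrt (f (z + t • u)) + c * ‖z + t • u - w‖
        < Real.sqrt (f z) + c * ‖z - w‖ := by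
      have hn : ‖z + t • u - w‖ ≤ ‖z - w‖ + t := by
        have h1 : z + t • u - w = (z - w) + t • u := by abel
        rw [h1]
        calc ‖(z - w) + t • u‖ ≤ ‖z - w‖ + ‖t • u‖ := norm_add_le _ _
        _ = ‖z - w‖ + t := by rw [norm_smul, hnu, Real.norm_of_nonneg ht0.le, mul_one]
      nlinarith
    exact absurd this (not_le.mpr hcontra)
  exact ⟨z, hfz, by simpa [hfz] using hzw⟩

lemma my_quad {d : ℕ} (f : EuclideanSpace ℝ (Fin d) → ℝ) (α r : ℝ)
    (hα : 0 < α) (hr : 0 < r) (w₀ : EuclideanSpace ℝ (Fin d))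
    (hnonneg : ∀ w, 0 ≤ f w) (hdiff : Differentiable ℝ f)
    (hPL : ∀ w ∈ closedBall w₀ (2*r), ‖gradient f w‖^2 ≥ 2*α*f w)
    (w : EuclideanSpace ℝ (Fin d)) (hw : w ∈ closedBall w₀ r)
    (hfw : f w < α/2 * r^2) :
    ∃ s, f s = 0 ∧ ‖s - w‖ < r ∧ α * ‖s - w‖^2 ≤ 8 * f w := by
  set a : ℝ := Real.sqrt (α/2) with hadef
  have ha : 0 < a := Real.sqrt_pos.mpr (by linarith)
  have ha2 : a^2 = α/2 := Real.sq_sqrt (by linarith)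
  set b : ℝ := Real.sqrt (f w) with hbdef
  have hb0 : 0 ≤ b := Real.sqrt_nonneg _
  have hb2 : b^2 = f w := Real.sq_sqrt (hnonneg w)
  have hbar : b < a * r := by
    have h1 : Real.sqrt (f w) < Real.sqrt (α/2 * r^2) := Real.sqrt_lt_sqrt (hnonneg w) hfw
    calc b < Real.sqrt (α/2 * r^2) := h1
    _ = a * r := by
        rw [Real.sqrt_mul (by linarith : (0:ℝ) ≤ α/2), Real.sqrt_sq hr.le]
  set c : ℝ := (b/r + a)/2 with hcdef
  have hc : 0 < c := by positivity
  have hca : c < a := by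
    have : b/r < a := (div_lt_iff₀ hr).mpr (by linarith [hbar])
    rw [hcdef]; linarith
  have hc2 : c^2 < α/2 := by
    have : c^2 < a^2 := by nlinarith
    linarith [ha2 ▸ this]
  have hbcr : b < c * r := by
    rw [hcdef]
    rw [div_mul_eq_mul_div, lt_div_iff₀ (by norm_num : (0:ℝ) < 2)]
    have : b/r * r = b := div_mul_cancel₀ b hr.ne'
    nlinarith [hbar, this]
  have hfwc : f w < c^2 * r^2 := by
    have : b^2 < (c*r)^2 := by nlinarith
    calc f w = b^2 := hb2.symm
    _ < (c*r)^2 := this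
    _ = c^2 * r^2 := by ring
  obtain ⟨s, hs0, hsle⟩ := my_descent f α r c hα hr hc hc2 w₀ hnonneg hdiff hPL w hw hfwc
  refine ⟨s, hs0, ?_, ?_⟩
  · calc ‖s - w‖ ≤ b / c := hsle
    _ < r := by rw [div_lt_iff₀ hc]; nlinarith
  · have hca2 : a/2 ≤ c := by
      rw [hcdef]
      have : 0 ≤ b/r := by positivity
      linarith
    have h1 : ‖s - w‖ ≤ b / (a/2) := le_trans hsle
      (div_le_div_of_nonneg_left hb0 (by linarith) hca2)
    have h2 : a * ‖s - w‖ ≤ 2 * b := by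
      rw [div_div_eq_mul_div, le_div_iff₀ ha] at h1
      nlinarith [h1]
    have h3 : (a * ‖s - w‖)^2 ≤ (2*b)^2 :=
      mul_self_le_mul_self (by positivity) h2 |>.trans_eq (by ring) |>.trans_eq' (by ring)
    nlinarith [h3, ha2, hb2]
theorem stmt_3 {d : ℕ} (f : EuclideanSpace ℝ (Fin d) → ℝ) (α r : ℝ)
    (hα : 0 < α) (hr : 0 < r) (w₀ : EuclideanSpace ℝ (Fin d))
    (hnonneg : ∀ w, 0 ≤ f w) (hdiff : Differentiable ℝ f)
    (hPL : ∀ w ∈ closedBall w₀ (2*r), ‖gradient f w‖^2 ≥ 2*α*f w)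
    (hinit : f w₀ < (1/2)*α*r^2) :
    ({w | f w = 0} ∩ closedBall w₀ r).Nonempty ∧
      ∀ w ∈ closedBall w₀ r, f w ≥ (α/8) * (infDist w {w | f w = 0})^2 := by
  have hinit' : f w₀ < α/2 * r^2 := by linarith
  obtain ⟨s₀, hs₀0, hs₀r, _⟩ := my_quad f α r hα hr w₀ hnonneg hdiff hPL w₀
    (mem_closedBall_self hr.le) hinit'
  refine ⟨⟨s₀, hs₀0, ?_⟩, ?_⟩
  · rw [mem_closedBall, dist_eq_norm]; exact hs₀r.le
  · intro w hwball
    by_cases hcase : f w < α/2 * r^2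
    · obtain ⟨s, hs0, _, hineq⟩ := my_quad f α r hα hr w₀ hnonneg hdiff hPL w hwball hcase
      have hd : infDist w {w | f w = 0} ≤ ‖s - w‖ := by
        have h := infDist_le_dist_of_mem (x := w) (show s ∈ {w | f w = 0} from hs0)
        rwa [dist_eq_norm, norm_sub_rev] at h
      have h0 : (0:ℝ) ≤ infDist w {w | f w = 0} := infDist_nonneg
      have hsq : (infDist w {w | f w = 0})^2 ≤ ‖s - w‖^2 := by nlinarith
      nlinarith [mul_le_mul_of_nonneg_left hsq hα.le]
    · have hd : infDist w {w | f w = 0} ≤ 2*r := by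
        calc infDist w {w | f w = 0} ≤ dist w s₀ :=
              infDist_le_dist_of_mem (show s₀ ∈ {w | f w = 0} from hs₀0)
        _ ≤ dist w w₀ + dist w₀ s₀ := dist_triangle _ _ _
        _ ≤ r + r := add_le_add (mem_closedBall.mp hwball)
              (by rw [dist_comm, dist_eq_norm]; exact hs₀r.le)
        _ = 2*r := by ring
      have h0 : (0:ℝ) ≤ infDist w {w | f w = 0} := infDist_nonneg
      have hsq : (infDist w {w | f w = 0})^2 ≤ (2*r)^2 := by nlinarith
      have hge : α/2 * r^2 ≤ f w := not_lt.mp hcase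
      nlinarith [mul_le_mul_of_nonneg_left hsq hα.le]
end

section
/- Let L : ℝ^d → [0,∞) be differentiable and satisfy ‖∇L(w)‖² ≥ 2α·L(w) for all w ∈ B_r(w₀), with α > 0 and L(w₀) < (1/2)αr². Then the zero set S = {w : L(w) = 0} intersects B_r(w₀) and dist²(w₀, S) ≤ (2/α)·L(w₀). -/
open Metric

set_option maxHeartbeats 1000000

private lemma key_lemma {d : ℕ} (f : EuclideanSpace ℝ (Fin d) → ℝ) (α r : ℝ)
    (hα : 0 < α) (hr : 0 < r) (w₀ : EuclideanSpace ℝ (Fin d))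
    (hnonneg : ∀ w, 0 ≤ f w) (hdiff : Differentiable ℝ f)
    (hPL : ∀ w ∈ closedBall w₀ r, ‖gradient f w‖^2 ≥ 2*α*f w)
    (k : ℝ) (hk0 : 0 < k) (hkr : Real.sqrt (f w₀) < k * r)
    (hk2 : k < Real.sqrt (α/2)) :
    ∃ x ∈ closedBall w₀ r, f x = 0 ∧ dist w₀ x ≤ Real.sqrt (f w₀) / k := by
  set g : EuclideanSpace ℝ (Fin d) → ℝ := fun w => Real.sqrt (f w) with hg
  have hgc : Continuous g := Real.continuous_sqrt.comp hdiff.continuous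
  have hcont : Continuous (fun w => g w + k * dist w w₀) :=
    hgc.add (continuous_const.mul (continuous_id.dist continuous_const))
  obtain ⟨x, hxball, hxmin⟩ := (isCompact_closedBall w₀ r).exists_isMinOn
    ⟨w₀, mem_closedBall_self hr.le⟩ hcont.continuousOn
  have hmin := isMinOn_iff.1 hxmin
  have hw0 := hmin w₀ (mem_closedBall_self hr.le)
  simp only [dist_self, mul_zero, add_zero] at hw0
  have hgx : 0 ≤ g x := Real.sqrt_nonneg _
  have hdx : k * dist x w₀ ≤ g w₀ := by linarith
  have hdxr : dist x w₀ < r := by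
    have : k * dist x w₀ < k * r := lt_of_le_of_lt hdx hkr
    exact lt_of_mul_lt_mul_left this hk0.le
  have hfx : f x = 0 := by
    by_contra h
    have hfx0 : 0 < f x := (hnonneg x).lt_of_ne (Ne.symm h)
    set G := gradient f x with hGdef
    have hG : HasGradientAt f G x := (hdiff x).hasGradientAt
    have hGnorm : ‖G‖^2 ≥ 2*α*f x := hPL x hxball
    have hGpos : 0 < ‖G‖ := by
      by_contra hG0
      push_neg at hG0
      have : ‖G‖ = 0 := le_antisymm hG0 (norm_nonneg _)
      rw [this] at hGnorm
      nlinarith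
    -- derivative of the line
    have hline : HasDerivAt (fun t : ℝ => x - t • G) (-G) 0 := by
      have h1 : HasDerivAt (fun t : ℝ => t • G) G 0 := by
        simpa using (hasDerivAt_id (0:ℝ)).smul_const G
      simpa using h1.const_sub x
    have hφ : HasDerivAt (fun t : ℝ => f (x - t • G)) (-‖G‖^2) 0 := by
      have hG' : HasFDerivAt f ((InnerProductSpace.toDual ℝ _) G) (x - (0:ℝ) • G) := by
        simpa using hG.hasFDerivAt
      have h2 := hG'.comp_hasDerivAt 0 hline
      have hval : ((InnerProductSpace.toDual ℝ (EuclideanSpace ℝ (Fin d))) G) (-G)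
          = -‖G‖^2 := by
        rw [InnerProductSpace.toDual_apply_apply, inner_neg_right, real_inner_self_eq_norm_sq]
      rw [hval] at h2
      exact h2
    have hsq : HasDerivAt Real.sqrt (1/(2*Real.sqrt (f x))) (f x) :=
      Real.hasDerivAt_sqrt hfx0.ne'
    have hgψ : HasDerivAt (fun t : ℝ => Real.sqrt (f (x - t • G)))
        ((1/(2*Real.sqrt (f x))) * (-‖G‖^2)) 0 := by
      have h3 : HasDerivAt Real.sqrt (1/(2*Real.sqrt (f x))) (f (x - (0:ℝ) • G)) := by
        simpa using hsq
      exact h3.comp 0 hφ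
    set c : ℝ := (1/(2*Real.sqrt (f x))) * (-‖G‖^2) + k * ‖G‖ with hc
    have hψ : HasDerivAt (fun t : ℝ => Real.sqrt (f (x - t • G)) + k * ‖G‖ * t) c 0 := by
      have h4 : HasDerivAt (fun t : ℝ => k * ‖G‖ * t) (k * ‖G‖) 0 := by
        simpa using (hasDerivAt_id (0:ℝ)).const_mul (k * ‖G‖)
      exact hgψ.add h4
    have hs : 0 < Real.sqrt (f x) := Real.sqrt_pos.2 hfx0
    have hsα : 0 < Real.sqrt (α/2) := Real.sqrt_pos.2 (by linarith)
    have hs2 : Real.sqrt (f x) ^ 2 = f x := Real.sq_sqrt hfx0.le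
    have hsα2 : Real.sqrt (α/2) ^ 2 = α/2 := Real.sq_sqrt (by linarith)
    have hGge : 2 * Real.sqrt (α/2) * Real.sqrt (f x) ≤ ‖G‖ := by
      nlinarith [norm_nonneg G]
    have hcneg : c < 0 := by
      have h2s : (0:ℝ) < 2 * Real.sqrt (f x) := by linarith
      have hprod : c * (2 * Real.sqrt (f x)) =
          -‖G‖^2 + k * ‖G‖ * (2 * Real.sqrt (f x)) := by
        rw [hc]; field_simp
      have h6 : 2 * k * Real.sqrt (f x) < ‖G‖ := by nlinarith
      have h7 : c * (2 * Real.sqrt (f x)) < 0 := by rw [hprod]; nlinarith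
      by_contra hc0
      push_neg at hc0
      nlinarith
    -- minimality near 0
    set t₀ : ℝ := (r - dist x w₀) / ‖G‖ with ht₀
    have ht₀pos : 0 < t₀ := div_pos (by linarith) hGpos
    have hmono : ∀ t : ℝ, 0 < t → t < t₀ →
        Real.sqrt (f (x - (0:ℝ) • G)) + k * ‖G‖ * 0 ≤
          Real.sqrt (f (x - t • G)) + k * ‖G‖ * t := by
      intro t ht ht'
      have hdline : dist (x - t • G) x = t * ‖G‖ := by
        rw [dist_eq_norm]
        simp [norm_smul, abs_of_pos ht]
      have hmem : x - t • G ∈ closedBall w₀ r := by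
        rw [mem_closedBall]
        have htri := dist_triangle (x - t • G) x w₀
        have : t * ‖G‖ < r - dist x w₀ := by
          rw [ht₀, lt_div_iff₀ hGpos] at ht'
          linarith
        rw [hdline] at htri
        linarith
      have h5 := hmin _ hmem
      have htri2 : dist (x - t • G) w₀ ≤ dist x w₀ + t * ‖G‖ := by
        have := dist_triangle (x - t • G) x w₀
        rw [hdline] at this
        linarith
      have hknn : 0 ≤ k := hk0.le
      have : k * dist (x - t • G) w₀ ≤ k * (dist x w₀ + t * ‖G‖) :=
        mul_le_mul_of_nonneg_left htri2 hknn
      simp only [zero_smul, sub_zero, mul_zero, add_zero]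
      have h5' : g x + k * dist x w₀ ≤ g (x - t • G) + k * dist (x - t • G) w₀ := h5
      rw [hg] at h5'
      simp only at h5'
      nlinarith
    -- contradiction via slope
    have hslope := hasDerivAt_iff_tendsto_slope.1 hψ
    have hslope' : Filter.Tendsto (slope (fun t : ℝ =>
        Real.sqrt (f (x - t • G)) + k * ‖G‖ * t) 0) (nhdsWithin 0 (Set.Ioi 0)) (nhds c) :=
      hslope.mono_left (nhdsWithin_mono _ (fun y hy => ne_of_gt hy))
    have hev1 : ∀ᶠ t in nhdsWithin (0:ℝ) (Set.Ioi 0),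
        slope (fun t : ℝ => Real.sqrt (f (x - t • G)) + k * ‖G‖ * t) 0 t < 0 :=
      hslope'.eventually (gt_mem_nhds hcneg)
    have hev2 : ∀ᶠ t in nhdsWithin (0:ℝ) (Set.Ioi 0), t < t₀ :=
      eventually_nhdsWithin_of_eventually_nhds (eventually_lt_nhds ht₀pos)
    have hev3 : ∀ᶠ t in nhdsWithin (0:ℝ) (Set.Ioi 0), t ∈ Set.Ioi (0:ℝ) :=
      eventually_mem_nhdsWithin
    obtain ⟨t, h1, h2, h3⟩ := (hev1.and (hev2.and hev3)).exists
    have ht : 0 < t := h3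
    have := hmono t ht h2
    have hslope_val : slope (fun t : ℝ =>
        Real.sqrt (f (x - t • G)) + k * ‖G‖ * t) 0 t =
        ((Real.sqrt (f (x - t • G)) + k * ‖G‖ * t) -
          (Real.sqrt (f (x - (0:ℝ) • G)) + k * ‖G‖ * 0)) / t := by
      rw [slope_def_field]; simp only [sub_zero]
    rw [hslope_val] at h1
    have := div_nonneg (by linarith : (0:ℝ) ≤ (Real.sqrt (f (x - t • G)) + k * ‖G‖ * t) -
      (Real.sqrt (f (x - (0:ℝ) • G)) + k * ‖G‖ * 0)) ht.le
    linarith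
  refine ⟨x, hxball, hfx, ?_⟩
  have hgw : g w₀ = Real.sqrt (f w₀) := rfl
  rw [dist_comm, le_div_iff₀ hk0]
  rw [hgw] at hdx
  linarith [mul_comm k (dist x w₀)]

theorem stmt_4 {d : ℕ} (f : EuclideanSpace ℝ (Fin d) → ℝ) (α r : ℝ)
    (hα : 0 < α) (hr : 0 < r) (w₀ : EuclideanSpace ℝ (Fin d))
    (hnonneg : ∀ w, 0 ≤ f w) (hdiff : Differentiable ℝ f)
    (hPL : ∀ w ∈ closedBall w₀ r, ‖gradient f w‖^2 ≥ 2*α*f w)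
    (hinit : f w₀ < (1/2)*α*r^2) :
    ({w | f w = 0} ∩ closedBall w₀ r).Nonempty ∧
      (infDist w₀ {w | f w = 0})^2 ≤ (2/α) * f w₀ := by
  have hsα : 0 < Real.sqrt (α/2) := Real.sqrt_pos.2 (by linarith)
  have hsα2 : Real.sqrt (α/2) ^ 2 = α/2 := Real.sq_sqrt (by linarith)
  have hinit' : Real.sqrt (f w₀) < Real.sqrt (α/2) * r := by
    have h1 : Real.sqrt (α/2) * r = Real.sqrt ((α/2) * r^2) := by
      rw [Real.sqrt_mul (by linarith) (r^2), Real.sqrt_sq hr.le]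
    rw [h1]
    exact Real.sqrt_lt_sqrt (hnonneg w₀) (by nlinarith)
  have hkey : ∀ k : ℝ, 0 < k → Real.sqrt (f w₀) < k * r → k < Real.sqrt (α/2) →
      ∃ x ∈ closedBall w₀ r, f x = 0 ∧ dist w₀ x ≤ Real.sqrt (f w₀) / k :=
    fun k hk0 hkr hk2 => key_lemma f α r hα hr w₀ hnonneg hdiff hPL k hk0 hkr hk2
  -- pick one k for nonemptiness
  obtain ⟨k₀, hk₀1, hk₀2⟩ := exists_between
    ((div_lt_iff₀ hr).2 hinit' : Real.sqrt (f w₀) / r < Real.sqrt (α/2))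
  have hk₀pos : 0 < k₀ := lt_of_le_of_lt (div_nonneg (Real.sqrt_nonneg _) hr.le) hk₀1
  obtain ⟨x₀, hx₀ball, hx₀zero, _⟩ :=
    hkey k₀ hk₀pos ((div_lt_iff₀ hr).1 hk₀1) hk₀2
  constructor
  · exact ⟨x₀, hx₀zero, hx₀ball⟩
  · set D := infDist w₀ {w | f w = 0} with hD
    have hDnn : 0 ≤ D := infDist_nonneg
    have hmain : D * Real.sqrt (α/2) ≤ Real.sqrt (f w₀) := by
      by_contra hlt
      push_neg at hlt
      have hDpos : 0 < D := by
        by_contra hD0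
        push_neg at hD0
        have : D * Real.sqrt (α/2) ≤ 0 := mul_nonpos_of_nonpos_of_nonneg hD0 hsα.le
        linarith [Real.sqrt_nonneg (f w₀)]
      have hm1 : Real.sqrt (f w₀) / D < Real.sqrt (α/2) := (div_lt_iff₀ hDpos).2 (by linarith [mul_comm D (Real.sqrt (α/2))])
      have hm2 : Real.sqrt (f w₀) / r < Real.sqrt (α/2) := (div_lt_iff₀ hr).2 hinit'
      obtain ⟨k, hk1, hk2⟩ := exists_between
        (max_lt hm1 hm2 : max (Real.sqrt (f w₀) / D) (Real.sqrt (f w₀) / r) < Real.sqrt (α/2))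
      have hkpos : 0 < k := lt_of_le_of_lt
        (le_max_of_le_right (div_nonneg (Real.sqrt_nonneg _) hr.le)) hk1
      have hkr : Real.sqrt (f w₀) < k * r :=
        (div_lt_iff₀ hr).1 (lt_of_le_of_lt (le_max_right _ _) hk1)
      obtain ⟨x, hxball, hxzero, hxdist⟩ := hkey k hkpos hkr hk2
      have hle : D ≤ dist w₀ x := infDist_le_dist_of_mem hxzero
      have : Real.sqrt (f w₀) / D < k := lt_of_le_of_lt (le_max_left _ _) hk1
      have : Real.sqrt (f w₀) / k < D := by
        rw [div_lt_iff₀ hkpos]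
        rw [div_lt_iff₀ hDpos] at this
        nlinarith
      linarith [le_trans hle hxdist]
    have hsq : Real.sqrt (f w₀) ^ 2 = f w₀ := Real.sq_sqrt (hnonneg w₀)
    have h2 : (D * Real.sqrt (α/2))^2 ≤ f w₀ := by
      rw [← hsq]
      exact pow_le_pow_left₀ (mul_nonneg hDnn hsα.le) hmain 2
    rw [mul_pow, hsα2] at h2
    rw [div_mul_eq_mul_div, le_div_iff₀ hα] at *
    nlinarith
end

section
/- Suppose interpolation (ℓ(·,z) ≥ 0, min L = 0, S = argmin L nonempty), β-smoothness of each ℓ(·,z) on the tube S_{2r}, quadratic growth L(w) ≥ (α/2)dist²(w,S) on S_{2r}, and the aiming condition: for all w ∈ S_{2r} there exists w̄ ∈ proj_S(w) with ⟨∇L(w), w - w̄⟩ ≥ θ·L(w). Fix w ∈ S_r and stepsize η < θ/β, and let w⁺ = w - η∇ℓ(w,z) with z ∼ P. Then E_z[dist²(w⁺, S)] ≤ (1 - αη(θ - βη))·dist²(w,S). -/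
open MeasureTheory Metric
open scoped RealInnerProductSpace

/-- Self-bounding (descent lemma) for a nonnegative function with Lipschitz gradient
along the segment `w - t • ∇f w`, `t ∈ [0, 1/β]`. -/
lemma descent_aux {E : Type*} [NormedAddCommGroup E] [InnerProductSpace ℝ E]
    [CompleteSpace E] (f : E → ℝ) {β : ℝ} (hβ : 0 < β) (w : E)
    (hd : ∀ t ∈ Set.Icc (0:ℝ) (1/β), DifferentiableAt ℝ f (w - t • gradient f w))
    (hs : ∀ t ∈ Set.Icc (0:ℝ) (1/β),
      ‖gradient f (w - t • gradient f w) - gradient f w‖ ≤ β * (t * ‖gradient f w‖))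
    (hpos : 0 ≤ f (w - (1/β) • gradient f w)) :
    ‖gradient f w‖^2 ≤ 2 * β * f w := by
  set g := gradient f w with hg
  set ψ : ℝ → ℝ := fun t => f (w - t • g) + t * ‖g‖^2 - β/2 * t^2 * ‖g‖^2 with hψ
  have hβ' : (0:ℝ) < 1/β := by positivity
  have key : ∀ t ∈ Set.Icc (0:ℝ) (1/β),
      HasDerivAt ψ (⟪gradient f (w - t • g), -g⟫ + ‖g‖^2 - β * t * ‖g‖^2) t := by
    intro t ht
    have hc : HasDerivAt (fun s : ℝ => w - s • g) (-g) t := by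
      simpa using ((hasDerivAt_id t).smul_const g).const_sub w
    have hf' : HasDerivAt (fun s : ℝ => f (w - s • g))
        (⟪gradient f (w - t • g), -g⟫) t := by
      have hgr := (hd t ht).hasGradientAt
      have := hgr.hasFDerivAt.comp_hasDerivAt t hc
      exact this
    have h2 : HasDerivAt (fun s : ℝ => s * ‖g‖^2) (‖g‖^2) t := by
      simpa using (hasDerivAt_id t).mul_const (‖g‖^2)
    have h3 : HasDerivAt (fun s : ℝ => β/2 * s^2 * ‖g‖^2) (β * t * ‖g‖^2) t := by
      have : HasDerivAt (fun s : ℝ => s^2) (2*t) t := by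
        simpa using hasDerivAt_pow 2 t
      have := ((this.const_mul (β/2)).mul_const (‖g‖^2))
      exact this.congr_deriv (by ring)
    exact (hf'.add h2).sub h3
  have hanti : AntitoneOn ψ (Set.Icc 0 (1/β)) := by
    apply antitoneOn_of_deriv_nonpos (convex_Icc _ _)
    · intro t ht
      exact (key t ht).continuousAt.continuousWithinAt
    · intro t ht
      rw [interior_Icc] at ht
      exact (key t ⟨(Set.mem_Ioo.1 ht).1.le,
        (Set.mem_Ioo.1 ht).2.le⟩).differentiableAt.differentiableWithinAt
    · intro t ht
      rw [interior_Icc] at ht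
      obtain ⟨ht0, ht1⟩ := ht
      have hk := key t ⟨ht0.le, ht1.le⟩
      rw [hk.deriv]
      have hb := hs t ⟨ht0.le, ht1.le⟩
      have h1 : ⟪gradient f (w - t • g), -g⟫
          = ⟪gradient f (w - t • g) - g, -g⟫ + ⟪g, -g⟫ := by
        rw [← inner_add_left, sub_add_cancel]
      have h2 : ⟪gradient f (w - t • g) - g, -g⟫ ≤ β * (t * ‖g‖) * ‖g‖ := by
        calc ⟪gradient f (w - t • g) - g, -g⟫
            ≤ ‖gradient f (w - t • g) - g‖ * ‖-g‖ := real_inner_le_norm _ _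
          _ ≤ β * (t * ‖g‖) * ‖g‖ := by
              rw [norm_neg]
              exact mul_le_mul_of_nonneg_right hb (norm_nonneg _)
      have h3 : ⟪g, -g⟫ = -‖g‖^2 := by
        rw [inner_neg_right, real_inner_self_eq_norm_sq]
      nlinarith [norm_nonneg g]
  have := hanti (Set.left_mem_Icc.2 hβ'.le) (Set.right_mem_Icc.2 hβ'.le) hβ'.le
  have hψ0 : ψ 0 = f w := by simp [hψ]
  have hψ1 : ψ (1/β) = f (w - (1/β) • g) + 1/(2*β) * ‖g‖^2 := by
    simp only [hψ]
    field_simp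
    ring
  rw [hψ0, hψ1] at this
  have hb2 : 1/(2*β) * ‖g‖^2 ≤ f w := by linarith
  calc ‖g‖^2 = 2 * β * (1/(2*β) * ‖g‖^2) := by field_simp
    _ ≤ 2 * β * f w := by
        apply mul_le_mul_of_nonneg_left hb2; positivity

theorem stmt_6 {d : ℕ} {Z : Type*} [MeasurableSpace Z]
    (μ : Measure Z) [IsProbabilityMeasure μ]
    (ℓ : EuclideanSpace ℝ (Fin d) → Z → ℝ) (Lf : EuclideanSpace ℝ (Fin d) → ℝ)
    (hLf : ∀ u, Lf u = ∫ z, ℓ u z ∂μ)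
    (hLint : ∀ u, Integrable (fun z => ℓ u z) μ)
    (S : Set (EuclideanSpace ℝ (Fin d))) (α β θ r η : ℝ)
    (hα : 0 < α) (hβ : 0 < β) (hθ : 0 < θ) (hr : 0 < r)
    -- interpolation
    (hnonneg : ∀ u z, 0 ≤ ℓ u z) (hS : S = {u | Lf u = 0}) (hSne : S.Nonempty)
    -- smoothness on the tube S_{2r}
    (hdiff : ∀ z, ∀ u, infDist u S ≤ 2*r → DifferentiableAt ℝ (fun w' => ℓ w' z) u)
    (hsmooth : ∀ z, ∀ u, infDist u S ≤ 2*r → ∀ v, infDist v S ≤ 2*r →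
      ‖gradient (fun w' => ℓ w' z) u - gradient (fun w' => ℓ w' z) v‖ ≤ β * ‖u - v‖)
    -- quadratic growth on the tube S_{2r}
    (hQG : ∀ u, infDist u S ≤ 2*r → Lf u ≥ (α/2) * (infDist u S)^2)
    -- aiming on the tube S_{2r}
    (haim : ∀ u, infDist u S ≤ 2*r → ∃ wbar ∈ S, ‖u - wbar‖ = infDist u S ∧
      ⟪gradient Lf u, u - wbar⟫ ≥ θ * Lf u)
    -- exchange of gradient and expectation
    (hgrad : ∀ u, gradient Lf u = ∫ z, gradient (fun w' => ℓ w' z) u ∂μ)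
    (hgradint : ∀ u, Integrable (fun z => gradient (fun w' => ℓ w' z) u) μ)
    (hgradsqint : ∀ u, Integrable (fun z => ‖gradient (fun w' => ℓ w' z) u‖^2) μ)
    (w : EuclideanSpace ℝ (Fin d)) (hw : infDist w S ≤ r)
    (hdistint : Integrable
      (fun z => (infDist (w - η • gradient (fun w' => ℓ w' z) w) S)^2) μ)
    (hη : 0 < η) (hη' : η < θ/β) :
    ∫ z, (infDist (w - η • gradient (fun w' => ℓ w' z) w) S)^2 ∂μ ≤
      (1 - α*η*(θ - β*η)) * (infDist w S)^2 := by
  have h2r : infDist w S ≤ 2*r := by linarith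
  obtain ⟨wbar, hwbarS, hwbarD, hwbarA⟩ := haim w h2r
  set G : Z → EuclideanSpace ℝ (Fin d) := fun z => gradient (fun w' => ℓ w' z) w with hG
  set D := infDist w S with hD
  -- ℓ wbar · = 0 a.e.
  have hLwbar : Lf wbar = 0 := by rw [hS] at hwbarS; exact hwbarS
  have hae0 : ∀ᵐ z ∂μ, ℓ wbar z = 0 := by
    have h0 : ∫ z, ℓ wbar z ∂μ = 0 := by rw [← hLf]; exact hLwbar
    have := (integral_eq_zero_iff_of_nonneg (fun z => hnonneg wbar z) (hLint wbar)).1 h0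
    filter_upwards [this] with z hz using hz
  -- a.e. self-bounding: ‖G z‖² ≤ 2β ℓ w z
  have hsb : ∀ᵐ z ∂μ, ‖G z‖^2 ≤ 2 * β * ℓ w z := by
    filter_upwards [hae0] with z hz0
    set f : EuclideanSpace ℝ (Fin d) → ℝ := fun w' => ℓ w' z with hf
    have hwbar2r : infDist wbar S ≤ 2*r := by
      rw [infDist_zero_of_mem hwbarS]; positivity
    -- gradient vanishes at wbar
    have hmin : IsLocalMin f wbar :=
      Filter.Eventually.of_forall fun u => by
        simp only [hf, hz0]; exact hnonneg u z
    have hgrad0 : gradient f wbar = 0 := by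
      have := hmin.fderiv_eq_zero
      simp [gradient, this]
    -- gradient bound at w
    have hGb : ‖G z‖ ≤ β * r := by
      have := hsmooth z w h2r wbar hwbar2r
      rw [hgrad0, sub_zero, hwbarD] at this
      calc ‖G z‖ ≤ β * D := by
            simpa [hG, hf] using this
        _ ≤ β * r := by nlinarith
    -- segment stays in the tube
    have htube : ∀ t ∈ Set.Icc (0:ℝ) (1/β), infDist (w - t • G z) S ≤ 2*r := by
      intro t ht
      obtain ⟨ht0, ht1⟩ := ht
      calc infDist (w - t • G z) S ≤ dist (w - t • G z) wbar :=
            infDist_le_dist_of_mem hwbarS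
        _ = ‖(w - wbar) - t • G z‖ := by
            rw [dist_eq_norm]; congr 1; abel
        _ ≤ ‖w - wbar‖ + ‖t • G z‖ := norm_sub_le _ _
        _ ≤ r + r := by
            apply add_le_add
            · rw [hwbarD]; exact hw
            · rw [norm_smul, Real.norm_eq_abs, abs_of_nonneg ht0]
              calc t * ‖G z‖ ≤ (1/β) * (β * r) := by
                    apply mul_le_mul ht1 hGb (norm_nonneg _) (by positivity)
                _ = r := by field_simp
        _ = 2*r := by ring
      done
    have := descent_aux f hβ w
      (fun t ht => hdiff z _ (htube t ht))
      (fun t ht => by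
        have hb := hsmooth z (w - t • gradient f w) (htube t ht) w h2r
        calc ‖gradient f (w - t • gradient f w) - gradient f w‖
            ≤ β * ‖w - t • gradient f w - w‖ := hb
          _ = β * (t * ‖gradient f w‖) := by
              rw [sub_sub_cancel_left, norm_neg, norm_smul, Real.norm_eq_abs,
                abs_of_nonneg ht.1])
      (hnonneg _ z)
    simpa [hG, hf] using this
  -- expectation of squared gradient norm
  have hEsq : ∫ z, ‖G z‖^2 ∂μ ≤ 2 * β * Lf w := by
    have : ∫ z, ‖G z‖^2 ∂μ ≤ ∫ z, 2 * β * ℓ w z ∂μ :=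
      integral_mono_ae (hgradsqint w) ((hLint w).const_mul (2*β)) hsb
    calc ∫ z, ‖G z‖^2 ∂μ ≤ ∫ z, 2 * β * ℓ w z ∂μ := this
      _ = 2 * β * Lf w := by rw [integral_const_mul, ← hLf]
  -- pointwise expansion bound
  have hPW : ∀ z, (infDist (w - η • G z) S)^2 ≤
      ‖w - wbar‖^2 - 2*η*⟪w - wbar, G z⟫ + η^2*‖G z‖^2 := by
    intro z
    have h1 : infDist (w - η • G z) S ≤ ‖(w - wbar) - η • G z‖ := by
      calc infDist (w - η • G z) S ≤ dist (w - η • G z) wbar :=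
            infDist_le_dist_of_mem hwbarS
        _ = ‖(w - wbar) - η • G z‖ := by rw [dist_eq_norm]; congr 1; abel
    have h2 : (infDist (w - η • G z) S)^2 ≤ ‖(w - wbar) - η • G z‖^2 := by
      apply pow_le_pow_left₀ (infDist_nonneg) h1
    calc (infDist (w - η • G z) S)^2 ≤ ‖(w - wbar) - η • G z‖^2 := h2
      _ = ‖w - wbar‖^2 - 2*η*⟪w - wbar, G z⟫ + η^2*‖G z‖^2 := by
          rw [norm_sub_sq_real, real_inner_smul_right, norm_smul, Real.norm_eq_abs,
            abs_of_nonneg hη.le, mul_pow]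
          ring
  -- integrability of the expansion
  have hIinner : Integrable (fun z => ⟪w - wbar, G z⟫) μ :=
    (hgradint w).const_inner (w - wbar)
  have hIexp : Integrable (fun z =>
      ‖w - wbar‖^2 - 2*η*⟪w - wbar, G z⟫ + η^2*‖G z‖^2) μ :=
    ((integrable_const _).sub (hIinner.const_mul (2*η))).add
      ((hgradsqint w).const_mul (η^2))
  -- integrate
  have hIint : ∫ z, ⟪w - wbar, G z⟫ ∂μ = ⟪gradient Lf w, w - wbar⟫ := by
    rw [integral_inner (hgradint w), ← hgrad, real_inner_comm]
  have hmain : ∫ z, (infDist (w - η • G z) S)^2 ∂μ ≤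
      ‖w - wbar‖^2 - 2*η*⟪gradient Lf w, w - wbar⟫ + η^2 * ∫ z, ‖G z‖^2 ∂μ := by
    calc ∫ z, (infDist (w - η • G z) S)^2 ∂μ
        ≤ ∫ z, (‖w - wbar‖^2 - 2*η*⟪w - wbar, G z⟫ + η^2*‖G z‖^2) ∂μ :=
          integral_mono hdistint hIexp hPW
      _ = ‖w - wbar‖^2 - 2*η*⟪gradient Lf w, w - wbar⟫ + η^2 * ∫ z, ‖G z‖^2 ∂μ := by
          have hI1 : Integrable (fun z => ‖w - wbar‖^2 - 2*η*⟪w - wbar, G z⟫) μ :=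
            (integrable_const _).sub (hIinner.const_mul (2*η))
          have hI2 : Integrable (fun z => η^2*‖G z‖^2) μ := (hgradsqint w).const_mul (η^2)
          have hI3 : Integrable (fun _ : Z => ‖w - wbar‖^2) μ := integrable_const _
          have hI4 : Integrable (fun z => 2*η*⟪w - wbar, G z⟫) μ := hIinner.const_mul (2*η)
          rw [integral_add hI1 hI2, integral_sub hI3 hI4,
            integral_const, integral_const_mul, integral_const_mul, hIint]
          simp
  -- final arithmetic
  have hLw0 : 0 ≤ Lf w := by
    rw [hLf]; exact integral_nonneg (fun z => hnonneg w z)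
  have hQ : Lf w ≥ (α/2) * D^2 := hQG w h2r
  have hβη : β*η < θ := by
    have := (lt_div_iff₀ hβ).1 hη'
    linarith
  have hnwD : ‖w - wbar‖ = D := hwbarD
  have hA := hwbarA
  have hEsqnn : (0:ℝ) ≤ ∫ z, ‖G z‖^2 ∂μ :=
    integral_nonneg fun z => by positivity
  rw [hnwD] at hmain
  nlinarith [mul_le_mul_of_nonneg_left hEsq (sq_nonneg η),
    mul_le_mul_of_nonneg_left hA (by positivity : (0:ℝ) ≤ 2*η),
    mul_le_mul_of_nonneg_left hQ (by nlinarith : (0:ℝ) ≤ 2*η*(θ - β*η))]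
end

section
/- Let {U_t}_{t≥0} be nonnegative random variables, u > 0, τ = inf{t ≥ 0 : U_t > u}, and q ∈ (0,1) with E[U_{t+1}·1_{τ>t} | U_{1:t}] ≤ q·U_t·1_{τ>t} for all t ≥ 0. If E[U₀] ≤ δ₁·u (with U₀ deterministic or in expectation), then: (a) P[τ = ∞] ≥ 1 - δ₁, and (b) for any δ₂, ε ∈ (0,1) and any t ≥ (1/(1-q))·log(1/(δ₂ε)), P[U_t ≤ ε·U₀] ≥ 1 - δ₁ - δ₂. -/
open MeasureTheory

theorem stmt_8 {Ω : Type*} {m0 : MeasurableSpace Ω}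
    (μ : Measure Ω) [IsProbabilityMeasure μ]
    (ℱ : Filtration ℕ m0) (U : ℕ → Ω → ℝ) (q u δ₁ : ℝ)
    (hq : q ∈ Set.Ioo (0:ℝ) 1) (hu : 0 < u) (hδ₁ : 0 < δ₁)
    (hnonneg : ∀ t ω, 0 ≤ U t ω)
    (hadapted : Adapted ℱ U)
    (hint : ∀ t, Integrable (U t) μ)
    (hstep : ∀ t, ∀ᵐ ω ∂μ,
      (μ[fun ω' => U (t+1) ω' * Set.indicator {ω'' | ∀ s ≤ t, U s ω'' ≤ u} 1 ω' | ℱ t]) ω ≤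
        q * (U t ω * Set.indicator {ω'' | ∀ s ≤ t, U s ω'' ≤ u} 1 ω))
    (hinit : (∫ ω, U 0 ω ∂μ) ≤ δ₁ * u) :
    (μ {ω | ∀ t, U t ω ≤ u}).toReal ≥ 1 - δ₁ ∧
    ∀ δ₂ ε : ℝ, δ₂ ∈ Set.Ioo (0:ℝ) 1 → ε ∈ Set.Ioo (0:ℝ) 1 →
      ∀ t : ℕ, (1/(1-q)) * Real.log (1/(δ₂*ε)) ≤ t →
        (μ {ω | U t ω ≤ ε * U 0 ω}).toReal ≥ 1 - δ₁ - δ₂ := by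
  classical
  obtain ⟨hq0, hq1⟩ := hq
  have hUm : ∀ t, Measurable (U t) := fun t => (hadapted t).mono (ℱ.le t) le_rfl
  -- the "no exceedance before time t" sets
  set D : ℕ → Set Ω := fun t => {ω | ∀ s < t, U s ω ≤ u} with hDdef
  have hDmeas : ∀ t, MeasurableSet (D t) := by
    intro t
    have : D t = ⋂ s ∈ Set.Iio t, {ω | U s ω ≤ u} := by
      ext ω; simp [hDdef]
    rw [this]
    exact MeasurableSet.biInter (Set.to_countable _)
      (fun s _ => measurableSet_le (hUm s) measurable_const)
  have hDsucc : ∀ t : ℕ, {ω'' | ∀ s ≤ t, U s ω'' ≤ u} = D (t+1) := by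
    intro t; ext ω; simp [hDdef, Nat.lt_succ_iff]
  have hDmono : ∀ t, D (t+1) ⊆ D t :=
    fun t ω hω s hs => hω s (hs.trans (Nat.lt_succ_self t))
  -- indicator basics
  have hind01 : ∀ (E : Set Ω) (ω : Ω), Set.indicator E (1 : Ω → ℝ) ω = 0 ∨
      Set.indicator E (1 : Ω → ℝ) ω = 1 := by
    intro E ω
    by_cases h : ω ∈ E
    · right; simp [Set.indicator_of_mem h]
    · left; simp [Set.indicator_of_notMem h]
  have hmul_nonneg : ∀ (t : ℕ) (E : Set Ω) (ω : Ω),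
      0 ≤ U t ω * Set.indicator E (1 : Ω → ℝ) ω := by
    intro t E ω
    rcases hind01 E ω with h | h <;> rw [h] <;> simp [hnonneg t ω]
  have hmul_le : ∀ (t : ℕ) (E : Set Ω) (ω : Ω),
      U t ω * Set.indicator E (1 : Ω → ℝ) ω ≤ U t ω := by
    intro t E ω
    rcases hind01 E ω with h | h <;> rw [h] <;> simp [hnonneg t ω]
  have hmulmeas : ∀ (t : ℕ) (E : Set Ω), MeasurableSet E →
      Measurable (fun ω => U t ω * Set.indicator E (1 : Ω → ℝ) ω) := by
    intro t E hE
    exact (hUm t).mul (measurable_const.indicator hE)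
  have hmulint : ∀ (t : ℕ) (E : Set Ω), MeasurableSet E →
      Integrable (fun ω => U t ω * Set.indicator E (1 : Ω → ℝ) ω) μ := by
    intro t E hE
    refine (hint t).mono (hmulmeas t E hE).aestronglyMeasurable ?_
    filter_upwards with ω
    rw [Real.norm_eq_abs, Real.norm_eq_abs, abs_of_nonneg (hmul_nonneg t E ω),
      abs_of_nonneg (hnonneg t ω)]
    exact hmul_le t E ω
  -- the key processes
  set Y : ℕ → Ω → ℝ := fun t ω => U t ω * Set.indicator (D t) (1 : Ω → ℝ) ω with hYdef
  set Z : ℕ → Ω → ℝ := fun t ω => U t ω * Set.indicator (D (t+1)) (1 : Ω → ℝ) ω with hZdef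
  set B : ℕ → Set Ω := fun t => D t ∩ {ω | u < U t ω} with hBdef
  set W : ℕ → Ω → ℝ := fun t ω => U t ω * Set.indicator (B t) (1 : Ω → ℝ) ω with hWdef
  have hBmeas : ∀ t, MeasurableSet (B t) :=
    fun t => (hDmeas t).inter (measurableSet_lt measurable_const (hUm t))
  have hY0 : Y 0 = U 0 := by
    funext ω
    have hD0 : D 0 = Set.univ := by ext ω; simp [hDdef]
    simp [hYdef, hD0]
  have hYnonneg : ∀ t ω, 0 ≤ Y t ω := fun t ω => hmul_nonneg t (D t) ω
  have hYint : ∀ t, Integrable (Y t) μ := fun t => hmulint t (D t) (hDmeas t)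
  have hZint : ∀ t, Integrable (Z t) μ := fun t => hmulint t (D (t+1)) (hDmeas (t+1))
  have hWint : ∀ t, Integrable (W t) μ := fun t => hmulint t (B t) (hBmeas t)
  have hYmeas : ∀ t, Measurable (Y t) := fun t => hmulmeas t (D t) (hDmeas t)
  -- hstep rewritten
  have hcond : ∀ t, ∀ᵐ ω ∂μ, (μ[Y (t+1) | ℱ t]) ω ≤ q * Z t ω := by
    intro t
    have := hstep t
    rw [hDsucc t] at this
    exact this
  have hZleY : ∀ t ω, Z t ω ≤ Y t ω := by
    intro t ω
    by_cases h : ω ∈ D (t+1)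
    · simp [hZdef, hYdef, Set.indicator_of_mem h, Set.indicator_of_mem (hDmono t h)]
    · simp [hZdef, Set.indicator_of_notMem h]
      exact hYnonneg t ω
  -- decomposition Y t = Z t + W t
  have hsplit : ∀ t ω, Y t ω = Z t ω + W t ω := by
    intro t ω
    have hmem : ω ∈ D (t+1) ↔ ω ∈ D t ∧ U t ω ≤ u := by
      constructor
      · intro h; exact ⟨hDmono t h, h t (Nat.lt_succ_self t)⟩
      · rintro ⟨h1, h2⟩ s hs
        rcases Nat.lt_succ_iff_lt_or_eq.mp hs with h | h
        · exact h1 s h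
        · subst h; exact h2
    by_cases hD : ω ∈ D t
    · by_cases hU : U t ω ≤ u
      · have h1 : ω ∈ D (t+1) := hmem.mpr ⟨hD, hU⟩
        have h2 : ω ∉ B t := fun hB => (not_lt.mpr hU) hB.2
        simp [hYdef, hZdef, hWdef, Set.indicator_of_mem hD, Set.indicator_of_mem h1,
          Set.indicator_of_notMem h2]
      · have h1 : ω ∉ D (t+1) := fun h => hU (hmem.mp h).2
        have h2 : ω ∈ B t := ⟨hD, lt_of_not_ge hU⟩
        simp [hYdef, hZdef, hWdef, Set.indicator_of_mem hD, Set.indicator_of_notMem h1,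
          Set.indicator_of_mem h2]
    · have h1 : ω ∉ D (t+1) := fun h => hD (hDmono t h)
      have h2 : ω ∉ B t := fun h => hD h.1
      simp [hYdef, hZdef, hWdef, Set.indicator_of_notMem hD, Set.indicator_of_notMem h1,
        Set.indicator_of_notMem h2]
  set a : ℕ → ℝ := fun t => ∫ ω, Y t ω ∂μ with hadef
  have ha_nonneg : ∀ t, 0 ≤ a t := fun t => integral_nonneg (fun ω => hYnonneg t ω)
  have ha0 : a 0 ≤ δ₁ * u := by
    rw [hadef]; simp only [hY0]; exact hinit
  have hZnonneg : ∀ t, 0 ≤ ∫ ω, Z t ω ∂μ :=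
    fun t => integral_nonneg (fun ω => hmul_nonneg (t) (D (t+1)) ω)
  -- one-step integral inequality
  have hstep_int : ∀ t, a (t+1) ≤ q * ∫ ω, Z t ω ∂μ := by
    intro t
    have h1 : a (t+1) = ∫ ω, (μ[Y (t+1) | ℱ t]) ω ∂μ := (integral_condExp (ℱ.le t)).symm
    have h2 : ∫ ω, (μ[Y (t+1) | ℱ t]) ω ∂μ ≤ ∫ ω, q * Z t ω ∂μ :=
      integral_mono_ae integrable_condExp ((hZint t).const_mul q) (hcond t)
    rw [h1]
    calc ∫ ω, (μ[Y (t+1) | ℱ t]) ω ∂μ ≤ ∫ ω, q * Z t ω ∂μ := h2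
      _ = q * ∫ ω, Z t ω ∂μ := integral_const_mul q _
  have hYsplit_int : ∀ t, a t = (∫ ω, Z t ω ∂μ) + ∫ ω, W t ω ∂μ := by
    intro t
    rw [hadef]
    simp only []
    rw [show (fun ω => Y t ω) = fun ω => Z t ω + W t ω from funext (hsplit t)]
    exact integral_add (hZint t) (hWint t)
  have hW_lb : ∀ t, u * (μ (B t)).toReal ≤ ∫ ω, W t ω ∂μ := by
    intro t
    have h1 : ∫ ω, Set.indicator (B t) (fun _ => u) ω ∂μ ≤ ∫ ω, W t ω ∂μ := by
      refine integral_mono (Integrable.indicator (integrable_const u) (hBmeas t)) (hWint t) ?_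
      intro ω
      by_cases h : ω ∈ B t
      · rw [Set.indicator_of_mem h]
        have : u < U t ω := h.2
        simp [hWdef, Set.indicator_of_mem h, this.le]
      · rw [Set.indicator_of_notMem h]
        simp [hWdef, Set.indicator_of_notMem h]
    rw [integral_indicator_const u (hBmeas t)] at h1
    simpa [mul_comm, measureReal_def] using h1
  -- telescoping bound for part (a)
  have hBbound : ∀ t, u * (μ (B t)).toReal ≤ a t - a (t+1) := by
    intro t
    have h1 := hstep_int t
    have h2 := hYsplit_int t
    have h3 := hW_lb t
    have h4 : a (t+1) ≤ ∫ ω, Z t ω ∂μ := by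
      nlinarith [hZnonneg t]
    nlinarith
  have hsum : ∀ T : ℕ, ∑ s ∈ Finset.range T, (μ (B s)).toReal ≤ δ₁ := by
    intro T
    have key : ∀ T : ℕ, ∑ s ∈ Finset.range T, u * (μ (B s)).toReal ≤ a 0 - a T := by
      intro T
      induction T with
      | zero => simp
      | succ T ih =>
        rw [Finset.sum_range_succ]
        have := hBbound T
        linarith
    have h1 := key T
    have h2 : u * ∑ s ∈ Finset.range T, (μ (B s)).toReal ≤ δ₁ * u := by
      rw [Finset.mul_sum]
      calc ∑ s ∈ Finset.range T, u * (μ (B s)).toReal ≤ a 0 - a T := h1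
        _ ≤ δ₁ * u := by linarith [ha_nonneg T, ha0]
    nlinarith
  have hBfin : ∀ t, μ (B t) ≠ ⊤ := fun t => measure_ne_top μ _
  have htsum : (∑' t, μ (B t)) ≤ ENNReal.ofReal δ₁ := by
    rw [ENNReal.tsum_eq_iSup_sum]
    refine iSup_le fun s => ?_
    have hsub : s ⊆ Finset.range (s.sup id + 1) := by
      intro i hi
      exact Finset.mem_range.mpr (Nat.lt_succ_of_le (Finset.le_sup (f := id) hi))
    calc ∑ t ∈ s, μ (B t) ≤ ∑ t ∈ Finset.range (s.sup id + 1), μ (B t) :=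
          Finset.sum_le_sum_of_subset hsub
      _ ≤ ENNReal.ofReal δ₁ := by
          rw [← ENNReal.ofReal_toReal (a := ∑ t ∈ Finset.range (s.sup id + 1), μ (B t))
            (by simp [hBfin])]
          refine ENNReal.ofReal_le_ofReal ?_
          rw [ENNReal.toReal_sum (fun t _ => hBfin t)]
          exact hsum _
  have hUnion : μ (⋃ t, B t) ≤ ENNReal.ofReal δ₁ := (measure_iUnion_le _).trans htsum
  have hsubU : ∀ ω, (∃ s, ¬ (U s ω ≤ u)) → ω ∈ ⋃ n, B n := by
    intro ω h
    refine Set.mem_iUnion.mpr ⟨Nat.find h, ?_, ?_⟩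
    · intro s hs
      by_contra hcon
      exact (Nat.find_min h hs) hcon
    · exact lt_of_not_ge (Nat.find_spec h)
  -- PART (a)
  have parta : (μ {ω | ∀ t, U t ω ≤ u}).toReal ≥ 1 - δ₁ := by
    set S : Set Ω := {ω | ∀ t, U t ω ≤ u} with hSdef
    have hSmeas : MeasurableSet S := by
      have : S = ⋂ t, {ω | U t ω ≤ u} := by ext ω; simp [hSdef]
      rw [this]
      exact MeasurableSet.iInter (fun t => measurableSet_le (hUm t) measurable_const)
    have hcomplsub : Sᶜ ⊆ ⋃ n, B n := by
      intro ω hω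
      simp only [hSdef, Set.mem_compl_iff, Set.mem_setOf_eq, not_forall] at hω
      exact hsubU ω hω
    have hScompl : (μ Sᶜ).toReal ≤ δ₁ := by
      have h1 : μ Sᶜ ≤ ENNReal.ofReal δ₁ := (measure_mono hcomplsub).trans hUnion
      exact (ENNReal.le_ofReal_iff_toReal_le (measure_ne_top μ _) hδ₁.le).mp h1
    have hadd : (μ S).toReal + (μ Sᶜ).toReal = 1 := by
      rw [← ENNReal.toReal_add (measure_ne_top μ _) (measure_ne_top μ _),
        measure_add_measure_compl hSmeas, measure_univ, ENNReal.toReal_one]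
    linarith
  refine ⟨parta, ?_⟩
  -- PART (b)
  intro δ₂ ε hδ₂ hε t ht
  obtain ⟨hδ₂0, hδ₂1⟩ := hδ₂
  obtain ⟨hε0, hε1⟩ := hε
  have hδε0 : 0 < δ₂ * ε := mul_pos hδ₂0 hε0
  -- numeric bound q^t ≤ δ₂ * ε
  have hqt : q ^ t ≤ δ₂ * ε := by
    have h1q : 0 < 1 - q := by linarith
    have hL : Real.log (1/(δ₂*ε)) ≤ t * (1 - q) := by
      have := ht
      rw [one_div_mul_eq_div] at this
      calc Real.log (1/(δ₂*ε)) = (Real.log (1/(δ₂*ε)) / (1-q)) * (1-q) := by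
            field_simp
        _ ≤ t * (1-q) := by
            apply mul_le_mul_of_nonneg_right _ h1q.le
            exact this
    have hlogq : Real.log q ≤ q - 1 := Real.log_le_sub_one_of_pos hq0
    have h2 : (t : ℝ) * Real.log q ≤ Real.log (δ₂*ε) := by
      have h3 : Real.log (1/(δ₂*ε)) = - Real.log (δ₂*ε) := by
        rw [one_div, Real.log_inv]
      rw [h3] at hL
      have h4 : (t:ℝ) * Real.log q ≤ (t:ℝ) * (q - 1) :=
        mul_le_mul_of_nonneg_left hlogq (Nat.cast_nonneg t)
      nlinarith
    calc q ^ t = Real.exp ((t : ℝ) * Real.log q) := by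
          rw [Real.exp_nat_mul, Real.exp_log hq0]
      _ ≤ Real.exp (Real.log (δ₂*ε)) := Real.exp_le_exp.mpr h2
      _ = δ₂ * ε := Real.exp_log hδε0
  -- conditional contraction: μ[Y t | ℱ 0] ≤ q^t * U 0 a.e.
  have hC : ∀ n, ∀ᵐ ω ∂μ, (μ[Y n | ℱ 0]) ω ≤ q ^ n * U 0 ω := by
    intro n
    induction n with
    | zero =>
      have : μ[Y 0 | ℱ 0] = U 0 := by
        rw [hY0]
        exact condExp_of_stronglyMeasurable (ℱ.le 0) (hadapted 0).stronglyMeasurable (hint 0)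
      rw [this]
      filter_upwards with ω
      simp
    | succ n ih =>
      have e1 : μ[Y (n+1) | ℱ 0] =ᵐ[μ] μ[μ[Y (n+1) | ℱ n] | ℱ 0] :=
        (condExp_condExp_of_le (ℱ.mono (Nat.zero_le n)) (ℱ.le n)).symm
      have hle : (μ[Y (n+1) | ℱ n]) ≤ᵐ[μ] (q • Y n) := by
        filter_upwards [hcond n] with ω hω
        calc (μ[Y (n+1) | ℱ n]) ω ≤ q * Z n ω := hω
          _ ≤ q * Y n ω := mul_le_mul_of_nonneg_left (hZleY n ω) hq0.le
          _ = (q • Y n) ω := by simp [smul_eq_mul]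
      have e2 : μ[μ[Y (n+1) | ℱ n] | ℱ 0] ≤ᵐ[μ] μ[q • Y n | ℱ 0] :=
        condExp_mono integrable_condExp ((hYint n).smul q) hle
      have e3 : μ[q • Y n | ℱ 0] =ᵐ[μ] q • μ[Y n | ℱ 0] := condExp_smul q (Y n) (ℱ 0)
      filter_upwards [e1, e2, e3, ih] with ω h1 h2 h3 h4
      calc (μ[Y (n+1) | ℱ 0]) ω = (μ[μ[Y (n+1) | ℱ n] | ℱ 0]) ω := h1
        _ ≤ (μ[q • Y n | ℱ 0]) ω := h2
        _ = q * (μ[Y n | ℱ 0]) ω := by rw [h3]; simp [smul_eq_mul]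
        _ ≤ q * (q ^ n * U 0 ω) := mul_le_mul_of_nonneg_left h4 hq0.le
        _ = q ^ (n+1) * U 0 ω := by ring
  -- conditional Markov
  set A' : Set Ω := {ω | ε * U 0 ω < Y t ω} with hA'def
  have hA'meas : MeasurableSet A' :=
    measurableSet_lt ((hUm 0).const_mul ε) (hYmeas t)
  set I : Ω → ℝ := Set.indicator A' (1 : Ω → ℝ) with hIdef
  have hIint : Integrable I μ := (integrable_const (1:ℝ)).indicator hA'meas
  set ρ : Ω → ℝ := μ[I | ℱ 0] with hρdef
  set P : Set Ω := {ω | 0 < U 0 ω} with hPdef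
  have hPmeas0 : MeasurableSet[ℱ 0] P :=
    measurableSet_lt measurable_const (hadapted 0)
  have hPmeas : MeasurableSet P := ℱ.le 0 P hPmeas0
  -- product integrability
  have hU0I_int : Integrable (fun ω => U 0 ω * I ω) μ := by
    have := hmulint 0 A' hA'meas
    simpa [hIdef] using this
  have hpull : μ[(fun ω => U 0 ω * I ω) | ℱ 0] =ᵐ[μ] fun ω => U 0 ω * ρ ω := by
    have := condExp_mul_of_stronglyMeasurable_left (m := ℱ 0) (μ := μ) (f := U 0) (g := I)
      (hadapted 0).stronglyMeasurable (by exact hU0I_int) hIint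
    filter_upwards [this] with ω hω
    exact hω
  have hεle : ∀ ω, ε * (U 0 ω * I ω) ≤ Y t ω := by
    intro ω
    by_cases h : ω ∈ A'
    · have : ε * U 0 ω < Y t ω := h
      simp only [hIdef, Set.indicator_of_mem h, Pi.one_apply, mul_one]
      linarith
    · simp only [hIdef, Set.indicator_of_notMem h, mul_zero]
      exact hYnonneg t ω
  have hcondM : ∀ᵐ ω ∂μ, ε * (U 0 ω * ρ ω) ≤ q ^ t * U 0 ω := by
    have h1 : μ[(fun ω => ε * (U 0 ω * I ω)) | ℱ 0] ≤ᵐ[μ] μ[Y t | ℱ 0] :=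
      condExp_mono (hU0I_int.const_mul ε) (hYint t)
        (Filter.Eventually.of_forall hεle)
    have h2 : μ[(fun ω => ε * (U 0 ω * I ω)) | ℱ 0] =ᵐ[μ]
        fun ω => ε * (μ[(fun ω => U 0 ω * I ω) | ℱ 0]) ω := by
      have := condExp_smul (m := ℱ 0) (μ := μ) (ε) (fun ω => U 0 ω * I ω)
      filter_upwards [this] with ω hω
      exact hω
    filter_upwards [h1, h2, hpull, hC t] with ω h1 h2 h3 h4
    calc ε * (U 0 ω * ρ ω) = ε * (μ[(fun ω => U 0 ω * I ω) | ℱ 0]) ω := by rw [h3]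
      _ = (μ[(fun ω => ε * (U 0 ω * I ω)) | ℱ 0]) ω := h2.symm
      _ ≤ (μ[Y t | ℱ 0]) ω := h1
      _ ≤ q ^ t * U 0 ω := h4
  -- bound on A' ∩ P
  have hA'P : (μ (A' ∩ P)).toReal ≤ δ₂ := by
    have hcε : 0 ≤ q ^ t / ε := div_nonneg (pow_nonneg hq0.le t) hε0.le
    have step1 : (μ (A' ∩ P)).toReal = ∫ ω in P, I ω ∂μ := by
      rw [hIdef, setIntegral_indicator hA'meas]
      simp only [Pi.one_apply]
      rw [setIntegral_const]
      simp [Set.inter_comm, measureReal_def]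
    have step2 : ∫ ω in P, I ω ∂μ = ∫ ω in P, ρ ω ∂μ :=
      (setIntegral_condExp (ℱ.le 0) hIint hPmeas0).symm
    have step3 : ∫ ω in P, ρ ω ∂μ ≤ ∫ ω in P, (q ^ t / ε) ∂μ := by
      refine setIntegral_mono_on_ae (integrable_condExp.integrableOn)
        (integrableOn_const (measure_lt_top μ P).ne) hPmeas ?_
      filter_upwards [hcondM] with ω hω hP
      have hU0pos : 0 < U 0 ω := hP
      have h5 : ε * ρ ω * U 0 ω ≤ q ^ t * U 0 ω := by nlinarith [hω]
      have h6 : ε * ρ ω ≤ q ^ t := le_of_mul_le_mul_right h5 hU0pos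
      rw [le_div_iff₀ hε0]
      linarith
    have step4 : ∫ ω in P, (q ^ t / ε) ∂μ ≤ q ^ t / ε := by
      rw [setIntegral_const]
      have : (μ P).toReal ≤ 1 := by
        have := prob_le_one (μ := μ) (s := P)
        exact (ENNReal.le_ofReal_iff_toReal_le (measure_ne_top μ _) one_pos.le).mp
          (by simpa using this)
      calc (μ P).toReal • (q ^ t / ε) = (μ P).toReal * (q ^ t / ε) := rfl
        _ ≤ 1 * (q ^ t / ε) := mul_le_mul_of_nonneg_right this hcε
        _ = q ^ t / ε := one_mul _
    have hfin : q ^ t / ε ≤ δ₂ := by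
      rw [div_le_iff₀ hε0]
      linarith [hqt]
    calc (μ (A' ∩ P)).toReal = ∫ ω in P, I ω ∂μ := step1
      _ = ∫ ω in P, ρ ω ∂μ := step2
      _ ≤ q ^ t / ε := step3.trans step4
      _ ≤ δ₂ := hfin
  -- A' ∩ Pᶜ is null
  have hA'N : μ (A' ∩ Pᶜ) = 0 := by
    have hU0zero : ∀ ω ∈ Pᶜ, U 0 ω = 0 := by
      intro ω hω
      have : ¬ 0 < U 0 ω := hω
      linarith [hnonneg 0 ω, not_lt.mp this]
    have hint1 : ∫ ω in Pᶜ, Y t ω ∂μ ≤ 0 := by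
      have e1 : ∫ ω in Pᶜ, Y t ω ∂μ = ∫ ω in Pᶜ, (μ[Y t | ℱ 0]) ω ∂μ :=
        (setIntegral_condExp (ℱ.le 0) (hYint t) hPmeas0.compl).symm
      have e2 : ∫ ω in Pᶜ, (μ[Y t | ℱ 0]) ω ∂μ ≤ ∫ ω in Pᶜ, (q ^ t * U 0 ω) ∂μ := by
        refine setIntegral_mono_on_ae (integrable_condExp.integrableOn)
          (((hint 0).const_mul _).integrableOn) hPmeas.compl ?_
        filter_upwards [hC t] with ω hω _
        exact hω
      have e3 : ∫ ω in Pᶜ, (q ^ t * U 0 ω) ∂μ = 0 := by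
        rw [setIntegral_congr_fun hPmeas.compl
          (g := fun _ => (0:ℝ)) (fun ω hω => by simp [hU0zero ω hω])]
        simp
      linarith [e1, e2, e3]
    have hint2 : ∫ ω in Pᶜ, Y t ω ∂μ = 0 :=
      le_antisymm hint1 (setIntegral_nonneg hPmeas.compl (fun ω _ => hYnonneg t ω))
    have hae : Y t =ᵐ[μ.restrict Pᶜ] 0 := by
      rw [← setIntegral_eq_zero_iff_of_nonneg_ae
        (Filter.Eventually.of_forall (fun ω => hYnonneg t ω)) ((hYint t).integrableOn)]
      exact hint2
    have hnull : μ ({ω | Y t ω ≠ 0} ∩ Pᶜ) = 0 := by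
      have h1 : (μ.restrict Pᶜ) {ω | Y t ω ≠ 0} = 0 := by
        have := hae
        rw [Filter.EventuallyEq, ae_iff] at this
        simpa using this
      rwa [Measure.restrict_apply (show MeasurableSet {ω | Y t ω ≠ 0} from (hYmeas t) (measurableSet_singleton 0).compl)] at h1
    refine measure_mono_null ?_ hnull
    intro ω hω
    obtain ⟨h1, h2⟩ := hω
    refine ⟨?_, h2⟩
    have : ε * U 0 ω < Y t ω := h1
    have hz := hU0zero ω h2
    simp only [Set.mem_setOf_eq]
    intro hcon
    rw [hcon, hz] at this
    simp at this
  -- assemble part (b)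
  set T : Set Ω := {ω | U t ω ≤ ε * U 0 ω} with hTdef
  have hTmeas : MeasurableSet T := measurableSet_le (hUm t) ((hUm 0).const_mul ε)
  have hTc : Tᶜ ⊆ (⋃ n, B n) ∪ A' := by
    intro ω hω
    have h1 : ¬ U t ω ≤ ε * U 0 ω := hω
    by_cases hD : ω ∈ D t
    · right
      have : Y t ω = U t ω := by simp [hYdef, Set.indicator_of_mem hD]
      show ε * U 0 ω < Y t ω
      rw [this]
      exact lt_of_not_ge h1
    · left
      have : ∃ s, ¬ (U s ω ≤ u) := by
        by_contra hcon
        push_neg at hcon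
        exact hD (fun s _ => hcon s)
      exact hsubU ω this
  have hμTc : (μ Tᶜ).toReal ≤ δ₁ + δ₂ := by
    have h1 : μ A' ≤ ENNReal.ofReal δ₂ := by
      have e1 : μ A' ≤ μ (A' ∩ P) + μ (A' ∩ Pᶜ) := by
        refine (measure_mono ?_).trans (measure_union_le _ _)
        intro ω hω
        by_cases h : ω ∈ P
        · exact Or.inl ⟨hω, h⟩
        · exact Or.inr ⟨hω, h⟩
      rw [hA'N, add_zero] at e1
      refine e1.trans ?_
      rw [← ENNReal.ofReal_toReal (measure_ne_top μ (A' ∩ P))]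
      exact ENNReal.ofReal_le_ofReal hA'P
    have h2 : μ Tᶜ ≤ ENNReal.ofReal δ₁ + ENNReal.ofReal δ₂ :=
      ((measure_mono hTc).trans (measure_union_le _ _)).trans (add_le_add hUnion h1)
    rw [← ENNReal.ofReal_add hδ₁.le hδ₂0.le] at h2
    exact (ENNReal.le_ofReal_iff_toReal_le (measure_ne_top μ _)
      (by linarith)).mp h2
  have hadd : (μ T).toReal + (μ Tᶜ).toReal = 1 := by
    rw [← ENNReal.toReal_add (measure_ne_top μ _) (measure_ne_top μ _),
      measure_add_measure_compl hTmeas, measure_univ, ENNReal.toReal_one]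
  show (μ T).toReal ≥ 1 - δ₁ - δ₂
  linarith
end

section
/- Let F : ℝ^d → ℝ^n be C¹ with Jacobian ∇F that is L-Lipschitz in operator norm on a ball B_r(w₀), and set L(w) = (1/2)‖F(w)‖². Then for all w, u, v ∈ B_r(w₀) with F(u) = F(v) = 0: |⟨∇L(w), u - v⟩| ≤ 8r²L·√(2L(w)). -/
open Metric
open scoped RealInnerProductSpace

theorem stmt_10 {d n : ℕ}
    (F : EuclideanSpace ℝ (Fin d) → EuclideanSpace ℝ (Fin n)) (L r : ℝ)
    (hL : 0 ≤ L) (hr : 0 < r) (w₀ : EuclideanSpace ℝ (Fin d))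
    (hdiff : ∀ x ∈ closedBall w₀ r, DifferentiableAt ℝ F x)
    (hLip : ∀ x ∈ closedBall w₀ r, ∀ y ∈ closedBall w₀ r,
      ‖fderiv ℝ F x - fderiv ℝ F y‖ ≤ L * ‖x - y‖)
    (Lf : EuclideanSpace ℝ (Fin d) → ℝ) (hLf : ∀ x, Lf x = (1/2) * ‖F x‖^2)
    (w u v : EuclideanSpace ℝ (Fin d))
    (hw : w ∈ closedBall w₀ r) (hu : u ∈ closedBall w₀ r) (hv : v ∈ closedBall w₀ r)
    (hFu : F u = 0) (hFv : F v = 0) :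
    |⟪gradient Lf w, u - v⟫| ≤ 8 * r^2 * L * Real.sqrt (2 * Lf w) := by
  set D := fderiv ℝ F w with hD
  have hF : HasFDerivAt F D w := (hdiff w hw).hasFDerivAt
  -- derivative of Lf
  have hinner : HasFDerivAt (fun t => ⟪F t, F t⟫)
      ((fderivInnerCLM ℝ (F w, F w)).comp (D.prod D)) w := hF.inner ℝ hF
  have hLf' : HasFDerivAt Lf ((1/2 : ℝ) • ((fderivInnerCLM ℝ (F w, F w)).comp (D.prod D))) w := by
    have : HasFDerivAt (fun t => (1/2 : ℝ) * ⟪F t, F t⟫)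
        ((1/2 : ℝ) • ((fderivInnerCLM ℝ (F w, F w)).comp (D.prod D))) w := hinner.const_mul _
    convert this using 2 with t
    rw [hLf, real_inner_self_eq_norm_sq]
  have hdiffLf : DifferentiableAt ℝ Lf w := hLf'.differentiableAt
  have hgrad := hdiffLf.hasGradientAt.hasFDerivAt
  have hfd : (InnerProductSpace.toDual ℝ _ (gradient Lf w)) =
      ((1/2 : ℝ) • ((fderivInnerCLM ℝ (F w, F w)).comp (D.prod D))) :=
    hgrad.unique hLf'
  have hpair : ⟪gradient Lf w, u - v⟫ = ⟪F w, D (u - v)⟫ := by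
    have := congrFun (congrArg DFunLike.coe hfd) (u - v)
    rw [InnerProductSpace.toDual_apply_apply] at this
    rw [this, ContinuousLinearMap.smul_apply, ContinuousLinearMap.comp_apply,
      ContinuousLinearMap.prod_apply, fderivInnerCLM_apply,
      real_inner_comm (D (u - v)) (F w), smul_eq_mul]
    ring
  -- mean value bound
  have hball : ∀ x ∈ closedBall w₀ r, ‖fderiv ℝ F x - D‖ ≤ 2 * r * L := by
    intro x hx
    calc ‖fderiv ℝ F x - D‖ ≤ L * ‖x - w‖ := hLip x hx w hw
      _ ≤ L * (2 * r) := by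
          apply mul_le_mul_of_nonneg_left _ hL
          calc ‖x - w‖ = dist x w := (dist_eq_norm x w).symm
            _ ≤ dist x w₀ + dist w₀ w := dist_triangle _ _ _
            _ ≤ r + r := add_le_add (mem_closedBall.mp hx) (dist_comm w₀ w ▸ mem_closedBall.mp hw)
            _ = 2 * r := by ring
      _ = 2 * r * L := by ring
  have hmvt : ‖(fun x => F x - D x) u - (fun x => F x - D x) v‖ ≤ (2 * r * L) * ‖u - v‖ := by
    apply Convex.norm_image_sub_le_of_norm_hasFDerivWithin_le
      (f' := fun x => fderiv ℝ F x - D) _ _ (convex_closedBall w₀ r) hv hu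
    · intro x hx
      exact (((hdiff x hx).hasFDerivAt.sub (D.hasFDerivAt)).hasFDerivWithinAt)
    · exact hball
  have hDuv : ‖D (u - v)‖ ≤ 4 * r^2 * L := by
    have key : D (u - v) = -((fun x => F x - D x) u - (fun x => F x - D x) v) := by
      simp only [map_sub, hFu, hFv, zero_sub]
      abel
    rw [key, norm_neg]
    calc ‖(fun x => F x - D x) u - (fun x => F x - D x) v‖ ≤ (2 * r * L) * ‖u - v‖ := hmvt
      _ ≤ (2 * r * L) * (2 * r) := by
          apply mul_le_mul_of_nonneg_left _ (by positivity)
          calc ‖u - v‖ = dist u v := (dist_eq_norm u v).symm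
            _ ≤ dist u w₀ + dist w₀ v := dist_triangle _ _ _
            _ ≤ r + r := add_le_add (mem_closedBall.mp hu) (dist_comm w₀ v ▸ mem_closedBall.mp hv)
            _ = 2 * r := by ring
      _ = 4 * r^2 * L := by ring
  have hsqrt : Real.sqrt (2 * Lf w) = ‖F w‖ := by
    rw [hLf]
    rw [show 2 * (1/2 * ‖F w‖^2) = ‖F w‖^2 by ring, Real.sqrt_sq (norm_nonneg _)]
  rw [hpair, hsqrt]
  calc |⟪F w, D (u - v)⟫| ≤ ‖F w‖ * ‖D (u - v)‖ := abs_real_inner_le_norm _ _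
    _ ≤ ‖F w‖ * (4 * r^2 * L) := mul_le_mul_of_nonneg_left hDuv (norm_nonneg _)
    _ ≤ ‖F w‖ * (8 * r^2 * L) := mul_le_mul_of_nonneg_left
        (by nlinarith [mul_nonneg (sq_nonneg r) hL]) (norm_nonneg _)
    _ = 8 * r^2 * L * ‖F w‖ := by ring
end

section
/- Let F : ℝ^d → ℝ^n be C¹ on B_r(w₀) with ∇F L-Lipschitz in operator norm, L(w) = (1/2)‖F(w)‖², and suppose quadratic growth L(w) ≥ (α/2)·dist²(w,S) holds where S = {w : F(w) = 0}. Then for all w ∈ B_r(w₀) and w̄ ∈ B_r(w₀) ∩ proj_S(w): ⟨∇L(w), w - w̄⟩ ≥ 2L(w) - (L√2/α)·L(w)^{3/2}. -/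
open Metric
open scoped RealInnerProductSpace

set_option maxHeartbeats 1000000 in
lemma taylor_rem {d n : ℕ} (F : EuclideanSpace ℝ (Fin d) → EuclideanSpace ℝ (Fin n))
    (L : ℝ) (hL0 : 0 ≤ L) (s : Set (EuclideanSpace ℝ (Fin d))) (hs : Convex ℝ s)
    (hdiff : ∀ x ∈ s, DifferentiableAt ℝ F x)
    (hLip : ∀ x ∈ s, ∀ y ∈ s, ‖fderiv ℝ F x - fderiv ℝ F y‖ ≤ L * ‖x - y‖)
    (w wbar : EuclideanSpace ℝ (Fin d)) (hw : w ∈ s) (hwbar : wbar ∈ s) :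
    ‖F w - F wbar - fderiv ℝ F w (w - wbar)‖ ≤ L / 2 * ‖w - wbar‖ ^ 2 := by
  set v := w - wbar with hv
  set γ : ℝ → EuclideanSpace ℝ (Fin d) := fun t => wbar + t • v with hγ
  have hγmem : ∀ t ∈ Set.Icc (0:ℝ) 1, γ t ∈ s := fun t ht =>
    hs.add_smul_sub_mem hwbar hw ht
  have hγ0 : γ 0 = wbar := by simp [hγ]
  have hγ1 : γ 1 = w := by simp [hγ, hv]
  -- derivative of h t = F (γ t) - t • (fderiv ℝ F w v)
  set A := fderiv ℝ F w with hA
  set h : ℝ → EuclideanSpace ℝ (Fin n) := fun t => F (γ t) - t • (A v) with hh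
  have hderiv : ∀ t ∈ Set.Icc (0:ℝ) 1,
      HasDerivAt h (fderiv ℝ F (γ t) v - A v) t := by
    intro t ht
    have hγd : HasDerivAt γ v t := by
      have h0 := ((hasDerivAt_id' t).smul_const v).const_add wbar
      rw [one_smul] at h0
      exact h0
    have h1 : HasDerivAt (fun t => F (γ t)) (fderiv ℝ F (γ t) v) t :=
      (hdiff (γ t) (hγmem t ht)).hasFDerivAt.comp_hasDerivAt t hγd
    have h2 : HasDerivAt (fun t : ℝ => t • (A v)) (A v) t := by
      simpa using (hasDerivAt_id t).smul_const (A v)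
    exact h1.sub h2
  have hcont : ContinuousOn (fun t => fderiv ℝ F (γ t) v - A v) (Set.Icc (0:ℝ) 1) := by
    have : LipschitzOnWith (Real.toNNReal (L * ‖v‖^2)) (fun t => fderiv ℝ F (γ t) v) (Set.Icc 0 1) := by
      apply LipschitzOnWith.of_dist_le_mul
      intro x hx y hy
      rw [dist_eq_norm, dist_eq_norm]
      calc ‖fderiv ℝ F (γ x) v - fderiv ℝ F (γ y) v‖
          = ‖(fderiv ℝ F (γ x) - fderiv ℝ F (γ y)) v‖ := by simp
        _ ≤ ‖fderiv ℝ F (γ x) - fderiv ℝ F (γ y)‖ * ‖v‖ :=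
            (fderiv ℝ F (γ x) - fderiv ℝ F (γ y)).le_opNorm v
        _ ≤ (L * ‖γ x - γ y‖) * ‖v‖ := by
            gcongr; exact hLip _ (hγmem x hx) _ (hγmem y hy)
        _ = L * ‖v‖^2 * ‖x - y‖ := by
            have : γ x - γ y = (x - y) • v := by
              simp [hγ, sub_smul]
            rw [this, norm_smul]; simp [norm_sub_rev]; ring
        _ ≤ Real.toNNReal (L * ‖v‖^2) * ‖x - y‖ := by
            gcongr; exact Real.le_coe_toNNReal _
    exact (this.continuousOn).sub continuousOn_const
  have hint : IntervalIntegrable (fun t => fderiv ℝ F (γ t) v - A v) MeasureTheory.volume 0 1 := by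
    apply ContinuousOn.intervalIntegrable
    rwa [Set.uIcc_of_le zero_le_one]
  have hftc := intervalIntegral.integral_eq_sub_of_hasDerivAt (fun t ht => hderiv t (by rwa [Set.uIcc_of_le zero_le_one] at ht)) hint
  have hh1 : h 1 - h 0 = F w - F wbar - A v := by
    simp [hh, hγ0, hγ1]; abel
  have hbound : ‖∫ t in (0:ℝ)..1, (fderiv ℝ F (γ t) v - A v)‖ ≤ L / 2 * ‖v‖^2 := by
    have hle : ∀ t ∈ Set.Ioc (0:ℝ) 1, ‖fderiv ℝ F (γ t) v - A v‖ ≤ L * ‖v‖^2 * (1 - t) := by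
      intro t ht
      calc ‖fderiv ℝ F (γ t) v - A v‖
          = ‖(fderiv ℝ F (γ t) - A) v‖ := by simp
        _ ≤ ‖fderiv ℝ F (γ t) - A‖ * ‖v‖ := (fderiv ℝ F (γ t) - A).le_opNorm v
        _ ≤ (L * ‖γ t - w‖) * ‖v‖ := by
            gcongr
            exact hLip _ (hγmem t ⟨le_of_lt ht.1, ht.2⟩) _ hw
        _ = L * ‖v‖^2 * (1 - t) := by
            have : γ t - w = -((1 - t) • v) := by
              simp [hγ, hv, sub_smul, smul_sub]; abel
            rw [this, norm_neg, norm_smul]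
            simp [abs_of_nonneg (sub_nonneg.mpr ht.2)]
            ring
    have hgint : IntervalIntegrable (fun t => L * ‖v‖^2 * (1 - t)) MeasureTheory.volume 0 1 := by
      exact ((continuous_const.mul (continuous_const.sub continuous_id)).intervalIntegrable 0 1)
    have := intervalIntegral.norm_integral_le_abs_of_norm_le (f := fun t => fderiv ℝ F (γ t) v - A v)
      (g := fun t => L * ‖v‖^2 * (1 - t)) (μ := MeasureTheory.volume) (a := 0) (b := 1) ?_ hgint
    · refine this.trans (le_of_eq ?_)
      rw [intervalIntegral.integral_const_mul]
      have : (∫ t in (0:ℝ)..1, (1 - t)) = 1/2 := by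
        rw [intervalIntegral.integral_sub intervalIntegrable_const intervalIntegral.intervalIntegrable_id]
        simp [integral_id]; norm_num
      rw [this, abs_of_nonneg (by positivity)]; ring
    · rw [Set.uIoc_of_le zero_le_one]
      exact MeasureTheory.ae_restrict_of_forall_mem measurableSet_Ioc hle
  rw [hftc, hh1] at hbound
  exact hbound

set_option maxHeartbeats 1000000 in
theorem stmt_12 {d n : ℕ}
    (F : EuclideanSpace ℝ (Fin d) → EuclideanSpace ℝ (Fin n)) (L r α : ℝ)
    (hL : 0 ≤ L) (hr : 0 < r) (hα : 0 < α) (w₀ : EuclideanSpace ℝ (Fin d))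
    (hdiff : ∀ x ∈ closedBall w₀ r, DifferentiableAt ℝ F x)
    (hLip : ∀ x ∈ closedBall w₀ r, ∀ y ∈ closedBall w₀ r,
      ‖fderiv ℝ F x - fderiv ℝ F y‖ ≤ L * ‖x - y‖)
    (Lf : EuclideanSpace ℝ (Fin d) → ℝ) (hLf : ∀ x, Lf x = (1/2) * ‖F x‖^2)
    (S : Set (EuclideanSpace ℝ (Fin d))) (hS : S = {x | F x = 0})
    (hQG : ∀ x ∈ closedBall w₀ r, Lf x ≥ (α/2) * (infDist x S)^2)
    (w wbar : EuclideanSpace ℝ (Fin d)) (hw : w ∈ closedBall w₀ r)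
    (hwbar : wbar ∈ closedBall w₀ r) (hwbarS : wbar ∈ S)
    (hproj : ‖w - wbar‖ = infDist w S) :
    ⟪gradient Lf w, w - wbar⟫ ≥ 2 * Lf w - (L * Real.sqrt 2 / α) * (Lf w) ^ ((3:ℝ)/2) := by
  have hFwbar : F wbar = 0 := by rw [hS] at hwbarS; exact hwbarS
  have hLfnn : 0 ≤ Lf w := by rw [hLf]; positivity
  set v := w - wbar with hv
  set A := fderiv ℝ F w with hA
  -- gradient inner product equals the Fréchet derivative applied to v
  have hLfeq : Lf = fun x => (1/2 : ℝ) * ‖F x‖^2 := funext hLf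
  have hgrad : ⟪gradient Lf w, v⟫ = ⟪F w, A v⟫ := by
    have h1 : (⟪gradient Lf w, v⟫ : ℝ) = fderiv ℝ Lf w v := by
      rw [gradient, InnerProductSpace.toDual_symm_apply]
    rw [h1, hLfeq]
    have hF := hdiff w hw
    have h : HasFDerivAt (fun x => (⟪F x, F x⟫ : ℝ)) _ w := (hF.hasFDerivAt.inner ℝ hF.hasFDerivAt)
    have h2 := h.const_mul (1/2 : ℝ)
    have heq : (fun x => (1/2 : ℝ) * ‖F x‖^2) = fun x => (1/2 : ℝ) * ⟪F x, F x⟫ := by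
      funext x; rw [real_inner_self_eq_norm_sq]
    rw [heq, h2.fderiv]
    simp only [ContinuousLinearMap.coe_smul', Pi.smul_apply, ContinuousLinearMap.coe_comp',
      Function.comp_apply, ContinuousLinearMap.prod_apply, fderivInnerCLM_apply, smul_eq_mul]
    rw [real_inner_comm ((fderiv ℝ F w) v)]
    ring
  -- Taylor remainder bound
  have hrem : ‖A v - F w‖ ≤ L / 2 * ‖v‖ ^ 2 := by
    have := taylor_rem F L hL (closedBall w₀ r) (convex_closedBall w₀ r) hdiff hLip w wbar hw hwbar
    rw [hFwbar, sub_zero] at this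
    calc ‖A v - F w‖ = ‖F w - A v‖ := norm_sub_rev _ _
      _ ≤ L / 2 * ‖v‖ ^ 2 := this
  -- norm of F w
  have hnormF : ‖F w‖ = Real.sqrt (2 * Lf w) := by
    rw [hLf]
    rw [show 2 * ((1:ℝ)/2 * ‖F w‖^2) = ‖F w‖^2 by ring, Real.sqrt_sq (norm_nonneg _)]
  -- quadratic growth bound
  have hvsq : ‖v‖ ^ 2 ≤ 2 / α * Lf w := by
    have h1 := hQG w hw
    rw [hproj]
    have h2 : infDist w S ^ 2 = (2/α) * (α/2 * infDist w S ^ 2) := by field_simp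
    rw [h2]
    gcongr
  -- main estimate
  have hkey : ⟪F w, A v⟫ ≥ ‖F w‖^2 - ‖F w‖ * (L / 2 * ‖v‖ ^ 2) := by
    have : ⟪F w, A v⟫ = ⟪F w, F w⟫ + ⟪F w, A v - F w⟫ := by
      rw [← inner_add_right]; congr 1; abel
    rw [this, real_inner_self_eq_norm_sq]
    have habs : |⟪F w, A v - F w⟫| ≤ ‖F w‖ * ‖A v - F w‖ := abs_real_inner_le_norm _ _
    have h2 : -(‖F w‖ * (L / 2 * ‖v‖ ^ 2)) ≤ ⟪F w, A v - F w⟫ := by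
      have := (abs_le.mp habs).1
      have h3 : ‖F w‖ * ‖A v - F w‖ ≤ ‖F w‖ * (L / 2 * ‖v‖ ^ 2) := by
        gcongr
      linarith
    linarith
  rw [hgrad]
  have hFsq : ‖F w‖^2 = 2 * Lf w := by rw [hLf]; ring
  have hrpow : (Lf w) ^ ((3:ℝ)/2) = Lf w * Real.sqrt (Lf w) := by
    rw [show (3:ℝ)/2 = 1 + 1/2 by norm_num, Real.rpow_add' hLfnn (by norm_num),
      Real.rpow_one, ← Real.sqrt_eq_rpow]
  have hbound2 : ‖F w‖ * (L / 2 * ‖v‖ ^ 2) ≤ (L * Real.sqrt 2 / α) * (Lf w) ^ ((3:ℝ)/2) := by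
    rw [hnormF, hrpow]
    calc Real.sqrt (2 * Lf w) * (L / 2 * ‖v‖ ^ 2)
        ≤ Real.sqrt (2 * Lf w) * (L / 2 * (2 / α * Lf w)) := by
          gcongr
      _ = (L * Real.sqrt 2 / α) * (Lf w * Real.sqrt (Lf w)) := by
          rw [Real.sqrt_mul (by norm_num : (0:ℝ) ≤ 2)]
          field_simp
  linarith [hkey, hbound2, hFsq]
end

section
/- Fix a > 0 and define L : ℝ² → ℝ by L(x,y) = (1/2)(y - ax²)². For any point (x, ax²) with x ≠ 0 on the parabola and any neighborhood U of the origin containing (x, ax²), there exists a point z ∈ U with ⟨∇L(z), z - (x, ax²)⟩ < 0. In particular, L is not quasar-convex on U relative to (x, ax²). -/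
open scoped RealInnerProductSpace

lemma grad_aux (a γ : ℝ) (L : EuclideanSpace ℝ (Fin 2) → ℝ)
    (hL : ∀ w, L w = (1/2) * (w 1 - a * (w 0)^2)^2)
    (z : EuclideanSpace ℝ (Fin 2)) (hz0 : z 0 = 0) (hz1 : z 1 = γ) :
    HasGradientAt L z z := by
  rw [hasGradientAt_iff_hasFDerivAt]
  have h0 : HasFDerivAt (fun w : EuclideanSpace ℝ (Fin 2) => w 0)
      (EuclideanSpace.proj (0:Fin 2) : EuclideanSpace ℝ (Fin 2) →L[ℝ] ℝ) z :=
    (EuclideanSpace.proj (0 : Fin 2) : EuclideanSpace ℝ (Fin 2) →L[ℝ] ℝ).hasFDerivAt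
  have h1 : HasFDerivAt (fun w : EuclideanSpace ℝ (Fin 2) => w 1)
      (EuclideanSpace.proj (1:Fin 2) : EuclideanSpace ℝ (Fin 2) →L[ℝ] ℝ) z :=
    (EuclideanSpace.proj (1 : Fin 2) : EuclideanSpace ℝ (Fin 2) →L[ℝ] ℝ).hasFDerivAt
  have hin : HasFDerivAt (fun w : EuclideanSpace ℝ (Fin 2) => w 1 - a * (w 0 * w 0))
      ((EuclideanSpace.proj (1:Fin 2) : EuclideanSpace ℝ (Fin 2) →L[ℝ] ℝ)
        - (a * (z 0 + z 0)) • (EuclideanSpace.proj (0:Fin 2) : EuclideanSpace ℝ (Fin 2) →L[ℝ] ℝ)) z := by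
    have := h1.sub ((h0.mul h0).const_mul a)
    refine this.congr_fderiv ?_
    ext v
    simp
    ring
  have hmain := (hin.mul hin).const_mul (1/2 : ℝ)
  have heq : (fun w : EuclideanSpace ℝ (Fin 2) =>
      (1/2) * ((w 1 - a * (w 0 * w 0)) * (w 1 - a * (w 0 * w 0)))) = L := by
    funext w; rw [hL w]; ring
  simp only [Pi.mul_apply] at hmain
  rw [heq] at hmain
  refine hmain.congr_fderiv ?_
  ext v
  simp [InnerProductSpace.toDual_apply_apply, PiLp.inner_apply, Fin.sum_univ_two, hz0, hz1]
  ring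

theorem stmt_16 (a : ℝ) (ha : 0 < a)
    (L : EuclideanSpace ℝ (Fin 2) → ℝ)
    (hL : ∀ w, L w = (1/2) * (w 1 - a * (w 0)^2)^2)
    (x : ℝ) (hx : x ≠ 0)
    (p : EuclideanSpace ℝ (Fin 2)) (hp0 : p 0 = x) (hp1 : p 1 = a * x^2)
    (U : Set (EuclideanSpace ℝ (Fin 2))) (hU : U ∈ nhds (0 : EuclideanSpace ℝ (Fin 2)))
    (hpU : p ∈ U) :
    ∃ z ∈ U, ⟪gradient L z, z - p⟫ < 0 := by
  obtain ⟨ε, hε, hball⟩ := Metric.mem_nhds_iff.mp hU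
  have hax : 0 < a * x ^ 2 := by positivity
  set γ : ℝ := min (ε/2) (a * x^2 / 2) with hγdef
  have hγ0 : 0 < γ := lt_min (by linarith) (by linarith)
  have hγε : γ < ε := lt_of_le_of_lt (min_le_left _ _) (by linarith)
  have hγax : γ < a * x^2 := lt_of_le_of_lt (min_le_right _ _) (by linarith)
  set z : EuclideanSpace ℝ (Fin 2) := EuclideanSpace.single 1 γ with hzdef
  have hz0 : z 0 = 0 := by simp [hzdef, EuclideanSpace.single_apply]
  have hz1 : z 1 = γ := by simp [hzdef, EuclideanSpace.single_apply]
  have hzU : z ∈ U := by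
    apply hball
    simp only [Metric.mem_ball, dist_zero_right, hzdef]
    rw [EuclideanSpace.norm_single]
    rw [Real.norm_eq_abs, abs_of_pos hγ0]
    exact hγε
  refine ⟨z, hzU, ?_⟩
  have hgrad : gradient L z = z := (grad_aux a γ L hL z hz0 hz1).gradient
  rw [hgrad]
  have : ⟪z, z - p⟫ = γ * (γ - a * x^2) := by
    simp [PiLp.inner_apply, Fin.sum_univ_two, hz0, hz1, hp1]
    ring
  rw [this]
  exact mul_neg_of_pos_of_neg hγ0 (by linarith)
end

section
/- Fix a > 0 and define L : ℝ² → ℝ by L(x,y) = (1/2)(y - ax²)². For any neighborhood U of the origin, there exists (u,v) ∈ U with ⟨∇L(u,v), (u,v) - (0,0)⟩ < 0; hence L is not quasar-convex relative to the origin on any neighborhood of the origin. -/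
open scoped RealInnerProductSpace

theorem grad17 (a : ℝ) (z : EuclideanSpace ℝ (Fin 2)) :
    HasGradientAt (fun w : EuclideanSpace ℝ (Fin 2) => (1/2) * (w 1 - a * (w 0)^2)^2)
      (WithLp.toLp 2 (fun i : Fin 2 => if i = 0 then (z 1 - a*(z 0)^2) * (-2*a*z 0) else (z 1 - a*(z 0)^2)) : EuclideanSpace ℝ (Fin 2)) z := by
  rw [hasGradientAt_iff_hasFDerivAt]
  simp only [pow_two]
  have h0 := (EuclideanSpace.proj (0 : Fin 2) (𝕜 := ℝ)).hasFDerivAt (x := z)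
  have h1 := (EuclideanSpace.proj (1 : Fin 2) (𝕜 := ℝ)).hasFDerivAt (x := z)
  have hq := h1.sub ((h0.mul h0).const_mul a)
  have h := (hq.mul hq).const_mul (1/2 : ℝ)
  refine HasFDerivAt.congr_fderiv (h.congr_of_eventuallyEq (Filter.Eventually.of_forall fun w => ?_)) ?_
  · simp
  ext h'
  simp [InnerProductSpace.toDual, PiLp.inner_apply, Fin.sum_univ_two]
  ring

theorem stmt_17 (a : ℝ) (ha : 0 < a)
    (L : EuclideanSpace ℝ (Fin 2) → ℝ)
    (hL : ∀ w, L w = (1/2) * (w 1 - a * (w 0)^2)^2)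
    (U : Set (EuclideanSpace ℝ (Fin 2))) (hU : U ∈ nhds (0 : EuclideanSpace ℝ (Fin 2))) :
    ∃ z ∈ U, ⟪gradient L z, z - 0⟫ < 0 := by
  obtain ⟨ε, hε, hball⟩ := Metric.mem_nhds_iff.mp hU
  set u : ℝ := min (ε/2) (min 1 (ε/(3*a))) with hu_def
  have hu0 : 0 < u := by
    apply lt_min (by linarith)
    exact lt_min one_pos (by positivity)
  have hu1 : u ≤ 1 := le_trans (min_le_right _ _) (min_le_left _ _)
  have hu2 : u ≤ ε/2 := min_le_left _ _
  have hu3 : u ≤ ε/(3*a) := le_trans (min_le_right _ _) (min_le_right _ _)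
  set v : ℝ := (3*a/2) * u^2 with hv_def
  have hv0 : 0 < v := by positivity
  have hvε : v ≤ ε/2 := by
    have : u * u ≤ 1 * (ε/(3*a)) := mul_le_mul hu1 hu3 hu0.le one_pos.le
    have h3a : 0 < 3*a := by linarith
    rw [hv_def]
    rw [one_mul] at this
    have := mul_le_mul_of_nonneg_left this (by positivity : (0:ℝ) ≤ 3*a/2)
    calc 3*a/2 * u^2 = 3*a/2 * (u*u) := by ring
      _ ≤ 3*a/2 * (ε/(3*a)) := this
      _ = ε/2 := by field_simp
  set z : EuclideanSpace ℝ (Fin 2) := WithLp.toLp 2 ![u, v] with hz_def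
  have hz0 : z 0 = u := rfl
  have hz1 : z 1 = v := rfl
  refine ⟨z, hball ?_, ?_⟩
  · -- z ∈ ball 0 ε
    rw [Metric.mem_ball, dist_zero_right, EuclideanSpace.norm_eq]
    rw [show Real.sqrt (∑ i, ‖z i‖^2) = Real.sqrt (u^2 + v^2) by
      congr 1; rw [Fin.sum_univ_two, hz0, hz1]; simp [Real.norm_eq_abs, sq_abs]]
    have : u^2 + v^2 < ε^2 := by nlinarith
    calc Real.sqrt (u^2+v^2) < Real.sqrt (ε^2) := by
          apply Real.sqrt_lt_sqrt (by positivity) this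
      _ = ε := Real.sqrt_sq hε.le
  · have hLeq : L = fun w : EuclideanSpace ℝ (Fin 2) => (1/2) * (w 1 - a * (w 0)^2)^2 :=
      funext hL
    have hg := grad17 a z
    rw [hLeq]
    rw [hg.gradient]
    rw [sub_zero]
    rw [real_inner_comm, PiLp.inner_apply, Fin.sum_univ_two]
    simp only [hz0, hz1, RCLike.inner_apply, conj_trivial]
    simp only [if_true, show ((1:Fin 2) = 0) = False by decide, if_false]
    have hvau : v - a*u^2 = (a/2)*u^2 := by rw [hv_def]; ring
    nlinarith [sq_nonneg u, pow_pos hu0 4, mul_pos ha ha]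
end

section
/- Let L : ℝ^d → [0,∞) satisfy, on a set W: (i) quadratic growth L(w) ≥ (α/2)dist²(w,S) with S = {L = 0}, and (ii) the bound E_z‖∇ℓ(w,z)‖² ≤ 2β·L(w), and (iii) aiming ⟨∇L(w), w - w̄⟩ ≥ θ·L(w) for some nearest point w̄ ∈ proj_S(w). Then for w ∈ W, η ∈ (0, θ/β), and w⁺ = w - η∇ℓ(w,z): E_z‖w⁺ - w̄‖² ≤ dist²(w,S) - 2η(θ - βη)·L(w) ≤ (1 - αη(θ - ηβ))·dist²(w,S). -/
open MeasureTheory Metric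
open scoped RealInnerProductSpace

theorem stmt_19 {d : ℕ} {Z : Type*} [MeasurableSpace Z]
    (μ : Measure Z) [IsProbabilityMeasure μ]
    (ℓ : EuclideanSpace ℝ (Fin d) → Z → ℝ) (Lf : EuclideanSpace ℝ (Fin d) → ℝ)
    (hLf : ∀ u, Lf u = ∫ z, ℓ u z ∂μ)
    (hnonneg : ∀ u z, 0 ≤ ℓ u z)
    (W : Set (EuclideanSpace ℝ (Fin d)))
    (S : Set (EuclideanSpace ℝ (Fin d))) (hS : S = {u | Lf u = 0})
    (α β θ η : ℝ) (hα : 0 < α) (hβ : 0 < β) (hθ : 0 < θ)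
    (hη : 0 < η) (hη' : η < θ/β)
    -- (i) quadratic growth on W
    (hQG : ∀ u ∈ W, Lf u ≥ (α/2) * (infDist u S)^2)
    -- (ii) second moment bound on W
    (hmom : ∀ u ∈ W,
      ∫ z, ‖gradient (fun w' => ℓ w' z) u‖^2 ∂μ ≤ 2*β*Lf u)
    -- exchange of gradient and expectation
    (hgrad : ∀ u, gradient Lf u = ∫ z, gradient (fun w' => ℓ w' z) u ∂μ)
    (hgradint : ∀ u, Integrable (fun z => gradient (fun w' => ℓ w' z) u) μ)
    (hgradsqint : ∀ u, Integrable (fun z => ‖gradient (fun w' => ℓ w' z) u‖^2) μ)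
    (w : EuclideanSpace ℝ (Fin d)) (hw : w ∈ W)
    (wbar : EuclideanSpace ℝ (Fin d)) (hwbarS : wbar ∈ S)
    (hproj : ‖w - wbar‖ = infDist w S)
    -- (iii) aiming at the nearest point wbar
    (haim : ⟪gradient Lf w, w - wbar⟫ ≥ θ * Lf w) :
    (∫ z, ‖w - η • gradient (fun w' => ℓ w' z) w - wbar‖^2 ∂μ ≤
        (infDist w S)^2 - 2*η*(θ - β*η) * Lf w) ∧
      (infDist w S)^2 - 2*η*(θ - β*η) * Lf w ≤
        (1 - α*η*(θ - η*β)) * (infDist w S)^2 := by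
  set g : Z → EuclideanSpace ℝ (Fin d) := fun z => gradient (fun w' => ℓ w' z) w with hg
  set v : EuclideanSpace ℝ (Fin d) := w - wbar with hv
  have hLnn : 0 ≤ Lf w := by
    rw [hLf]
    exact integral_nonneg (fun z => hnonneg w z)
  have hθβη : 0 < θ - β * η := by
    have := (lt_div_iff₀ hβ).mp hη'
    linarith
  have hexp : ∀ z, ‖w - η • g z - wbar‖^2
      = ‖v‖^2 - 2 * η * ⟪g z, v⟫ + η^2 * ‖g z‖^2 := by
    intro z
    have : w - η • g z - wbar = v - η • g z := by rw [hv]; abel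
    rw [this, norm_sub_sq_real, real_inner_smul_right, norm_smul, real_inner_comm]
    simp [mul_pow, sq_abs]
    ring
  have flip : (fun z => ⟪g z, v⟫) = fun z => (innerSL ℝ v) (g z) :=
    funext fun z => by simp [real_inner_comm, mul_comm]
  have hintinner : Integrable (fun z => ⟪g z, v⟫) μ := by
    rw [flip]; exact (innerSL ℝ v).integrable_comp (hgradint w)
  have hintsq : Integrable (fun z => ‖g z‖^2) μ := hgradsqint w
  have hint : ∫ z, ‖w - η • g z - wbar‖^2 ∂μ
      = ‖v‖^2 - 2 * η * ∫ z, ⟪g z, v⟫ ∂μ + η^2 * ∫ z, ‖g z‖^2 ∂μ := by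
    simp_rw [hexp]
    rw [integral_add, integral_sub (integrable_const _) (hintinner.const_mul _),
      integral_const, integral_const_mul, integral_const_mul]
    · simp
    · exact (integrable_const _).sub (hintinner.const_mul _)
    · exact hintsq.const_mul _
  have hinner_eq : ∫ z, ⟪g z, v⟫ ∂μ = ⟪gradient Lf w, v⟫ := by
    rw [flip, ContinuousLinearMap.integral_comp_comm _ (hgradint w), ← hgrad w]
    simp [real_inner_comm, mul_comm]
  have hA : (θ : ℝ) * Lf w ≤ ∫ z, ⟪g z, v⟫ ∂μ := by
    rw [hinner_eq]; exact haim
  have hB : ∫ z, ‖g z‖^2 ∂μ ≤ 2 * β * Lf w := hmom w hw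
  have hnormv : ‖v‖^2 = (infDist w S)^2 := by rw [hv, hproj]
  have hQ := hQG w hw
  constructor
  · rw [hint, hnormv]
    nlinarith [sq_nonneg η, mul_pos hη hη]
  · nlinarith [sq_nonneg (infDist w S), mul_pos hη hθβη]
end
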